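/- arXiv:2201.08719 — 9 statements merged into one kernel-verified Lean document; each statement's English description precedes it below -/
import Mathlib

section
/- Let (V, E) be a finite hypergraph in which every hyperedge is nonempty and E is nonempty, and let d denote the maximum degree of a vertex (the maximum, over vertices v, of the number of hyperedges containing v). Suppose x : V → ℝ is a nonnegative function such that for every hyperedge e ∈ E one has Σ_{v ∈ e} x(v) ≥ 1. Then there exists a blocking set S ⊆ V (a set meeting every hyperedge) with |S| ≤ (Σ_{v ∈ V} x(v)) · (1 + log₂ d). -/
open Finset

noncomputable def Hreal (n : ℕ) : ℝ := ∑ j ∈ Finset.range n, (1 : ℝ) / (j + 1)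

lemma Hreal_nonneg (n : ℕ) : 0 ≤ Hreal n := by
  apply Finset.sum_nonneg; intro j _; positivity

lemma Hreal_mono : Monotone Hreal := by
  intro m n h
  apply Finset.sum_le_sum_of_subset_of_nonneg (Finset.range_subset_range.2 h)
  intro j _ _; positivity

lemma Hreal_eq_harmonic (n : ℕ) : Hreal n = (harmonic n : ℝ) := by
  unfold Hreal harmonic
  push_cast
  simp [one_div]

lemma Hreal_diff {k m a : ℕ} (hkm : k ≤ m) (hma : m ≤ a) (ha : 1 ≤ a) :
    ((m : ℝ) - k) / a ≤ Hreal m - Hreal k := by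
  have hsplit : Hreal k + ∑ j ∈ Finset.Ico k m, (1 : ℝ) / (j + 1) = Hreal m := by
    unfold Hreal
    exact Finset.sum_range_add_sum_Ico _ hkm
  have hbound : ((m : ℝ) - k) / a ≤ ∑ j ∈ Finset.Ico k m, (1 : ℝ) / (j + 1) := by
    have : ∀ j ∈ Finset.Ico k m, (1 : ℝ) / a ≤ (1 : ℝ) / (j + 1) := by
      intro j hj
      have hj' : j < m := (Finset.mem_Ico.1 hj).2
      have : (j : ℝ) + 1 ≤ a := by
        have : j + 1 ≤ a := le_trans hj' hma
        exact_mod_cast this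
      apply one_div_le_one_div_of_le (by positivity) this
    calc ((m : ℝ) - k) / a = (Finset.Ico k m).card • ((1:ℝ)/a) := by
          rw [Nat.card_Ico, nsmul_eq_mul]
          push_cast [Nat.cast_sub hkm]
          ring
      _ ≤ ∑ j ∈ Finset.Ico k m, (1 : ℝ) / (j + 1) :=
          Finset.card_nsmul_le_sum _ _ _ this
  linarith

lemma key_blocking {V : Type*} [Fintype V] [DecidableEq V] (x : V → ℝ) (hx : ∀ v, 0 ≤ x v) :
    ∀ n (F : Finset (Finset V)), F.card = n → (∀ e ∈ F, e.Nonempty) →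
      (∀ e ∈ F, 1 ≤ ∑ v ∈ e, x v) →
      ∃ S : Finset V, (∀ e ∈ F, ∃ v ∈ S, v ∈ e) ∧
        (S.card : ℝ) ≤ ∑ v : V, x v * Hreal ((F.filter fun e => v ∈ e).card) := by
  intro n
  induction n using Nat.strong_induction_on with
  | _ n ih =>
    intro F hcard hne hcov
    rcases F.eq_empty_or_nonempty with rfl | hFne
    · exact ⟨∅, by simp, by
        simp only [Finset.card_empty, Nat.cast_zero]
        apply Finset.sum_nonneg; intro v _
        exact mul_nonneg (hx v) (Hreal_nonneg _)⟩
    · obtain ⟨e₀, he₀⟩ := hFne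
      obtain ⟨v₀, hv₀⟩ := hne e₀ he₀
      have hVne : (Finset.univ : Finset V).Nonempty := ⟨v₀, Finset.mem_univ v₀⟩
      set deg : V → ℕ := fun v => (F.filter fun e => v ∈ e).card with hdeg
      obtain ⟨w, -, hw⟩ := Finset.exists_max_image Finset.univ deg hVne
      have hwmax : ∀ v, deg v ≤ deg w := fun v => hw v (Finset.mem_univ v)
      have ha : 1 ≤ deg w := by
        refine le_trans ?_ (hwmax v₀)
        have : e₀ ∈ F.filter fun e => v₀ ∈ e := Finset.mem_filter.2 ⟨he₀, hv₀⟩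
        exact Finset.card_pos.2 ⟨e₀, this⟩
      set F' : Finset (Finset V) := F.filter fun e => w ∉ e with hF'
      have hF'ss : F' ⊂ F := by
        refine Finset.filter_ssubset.2 ?_
        obtain ⟨e₁, he₁⟩ := Finset.card_pos.1 ha
        have := Finset.mem_filter.1 he₁
        exact ⟨e₁, this.1, not_not_intro this.2⟩
      obtain ⟨S', hS'block, hS'card⟩ := ih F'.card (hcard ▸ Finset.card_lt_card hF'ss) F' rfl
        (fun e he => hne e (Finset.mem_filter.1 he).1)
        (fun e he => hcov e (Finset.mem_filter.1 he).1)
      refine ⟨insert w S', ?_, ?_⟩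
      · intro e he
        by_cases hwe : w ∈ e
        · exact ⟨w, Finset.mem_insert_self w S', hwe⟩
        · obtain ⟨v, hv1, hv2⟩ := hS'block e (Finset.mem_filter.2 ⟨he, hwe⟩)
          exact ⟨v, Finset.mem_insert_of_mem hv1, hv2⟩
      · set deg' : V → ℕ := fun v => (F'.filter fun e => v ∈ e).card with hdeg'
        -- deg v = deg' v + (edges containing v and w)
        set G : Finset (Finset V) := F.filter fun e => w ∈ e with hG
        have hdegsplit : ∀ v, deg v = deg' v + (G.filter fun e => v ∈ e).card := by
          intro v
          have huni : (F.filter fun e => v ∈ e) =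
              (F'.filter fun e => v ∈ e) ∪ (G.filter fun e => v ∈ e) := by
            ext e
            simp only [hF', hG, Finset.mem_union, Finset.mem_filter]
            tauto
          show (F.filter fun e => v ∈ e).card
              = (F'.filter fun e => v ∈ e).card + (G.filter fun e => v ∈ e).card
          rw [huni, Finset.card_union_of_disjoint]
          rw [Finset.disjoint_left]
          intro e he1 he2
          have h1 := Finset.mem_filter.1 (Finset.mem_filter.1 he1).1
          have h2 := Finset.mem_filter.1 (Finset.mem_filter.1 he2).1
          exact h1.2 h2.2
        have hGcard : G.card = deg w := by
          rw [hG, hdeg]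
        -- double counting: ∑ v, x v * (edges in G containing v) ≥ G.card
        have hdouble : (G.card : ℝ) ≤ ∑ v : V, x v * ((G.filter fun e => v ∈ e).card : ℝ) := by
          have swap : ∑ v : V, x v * ((G.filter fun e => v ∈ e).card : ℝ)
              = ∑ e ∈ G, ∑ v ∈ e, x v := by
            have : ∀ v : V, x v * ((G.filter fun e => v ∈ e).card : ℝ)
                = ∑ e ∈ G, if v ∈ e then x v else 0 := by
              intro v
              rw [Finset.sum_ite, Finset.sum_const_zero, add_zero, Finset.sum_const,
                nsmul_eq_mul, mul_comm]
            rw [Finset.sum_congr rfl fun v _ => this v, Finset.sum_comm]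
            congr 1
            ext e
            rw [Finset.sum_ite_mem, Finset.univ_inter]
          rw [swap]
          calc (G.card : ℝ) = ∑ _e ∈ G, (1 : ℝ) := by simp
            _ ≤ ∑ e ∈ G, ∑ v ∈ e, x v :=
              Finset.sum_le_sum fun e he => hcov e (Finset.mem_filter.1 he).1
        -- key inequality
        have hkey : (∑ v : V, x v * Hreal (deg' v)) + 1 ≤ ∑ v : V, x v * Hreal (deg v) := by
          have hterm : ∀ v : V,
              x v * (((deg v : ℝ) - deg' v) / (deg w)) ≤ x v * (Hreal (deg v) - Hreal (deg' v)) := by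
            intro v
            apply mul_le_mul_of_nonneg_left _ (hx v)
            apply Hreal_diff _ (hwmax v) ha
            rw [hdegsplit v]; exact Nat.le_add_right _ _
          have hsum : 1 ≤ ∑ v : V, x v * (((deg v : ℝ) - deg' v) / (deg w)) := by
            have h1 : ∑ v : V, x v * (((deg v : ℝ) - deg' v) / (deg w))
                = (∑ v : V, x v * ((G.filter fun e => v ∈ e).card : ℝ)) / (deg w) := by
              rw [Finset.sum_div]
              apply Finset.sum_congr rfl
              intro v _
              have : (deg v : ℝ) - deg' v = ((G.filter fun e => v ∈ e).card : ℝ) := by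
                rw [hdegsplit v]; push_cast; ring
              rw [this, mul_div_assoc]
            rw [h1]
            rw [le_div_iff₀ (by exact_mod_cast ha : (0:ℝ) < deg w), one_mul]
            calc ((deg w : ℝ)) = (G.card : ℝ) := by rw [hGcard]
              _ ≤ _ := hdouble
          have hsum2 : 1 ≤ ∑ v : V, (x v * Hreal (deg v) - x v * Hreal (deg' v)) := by
            refine le_trans hsum (Finset.sum_le_sum fun v _ => ?_)
            rw [← mul_sub]; exact hterm v
          rw [Finset.sum_sub_distrib] at hsum2
          linarith
        calc ((insert w S').card : ℝ) ≤ (S'.card : ℝ) + 1 := by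
              exact_mod_cast Finset.card_insert_le w S'
          _ ≤ (∑ v : V, x v * Hreal (deg' v)) + 1 := by linarith [hS'card]
          _ ≤ ∑ v : V, x v * Hreal (deg v) := hkey

/-- For a finite hypergraph `(V, E)` with nonempty edge set and all
hyperedges nonempty, with maximum vertex degree `d`, any nonnegative fractional
blocking solution `x` yields a blocking set of size at most `(∑ v, x v) * (1 + log₂ d)`. -/
theorem hypergraph_blocking_set_of_fractional {V : Type*} [Fintype V] [DecidableEq V]
    (E : Finset (Finset V)) (hEne : E.Nonempty) (hedge : ∀ e ∈ E, e.Nonempty)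
    (d : ℕ) (hd : d = Finset.univ.sup fun v : V => (E.filter fun e => v ∈ e).card)
    (x : V → ℝ) (hx : ∀ v, 0 ≤ x v)
    (hcov : ∀ e ∈ E, 1 ≤ ∑ v ∈ e, x v) :
    ∃ S : Finset V, (∀ e ∈ E, ∃ v ∈ S, v ∈ e) ∧
      (S.card : ℝ) ≤ (∑ v : V, x v) * (1 + Real.logb 2 d) := by
  obtain ⟨S, hblock, hcard⟩ := key_blocking x hx E.card E rfl hedge hcov
  refine ⟨S, hblock, le_trans hcard ?_⟩
  have hd1 : 1 ≤ d := by
    obtain ⟨e₀, he₀⟩ := hEne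
    obtain ⟨v₀, hv₀⟩ := hedge e₀ he₀
    rw [hd]
    calc 1 ≤ (E.filter fun e => v₀ ∈ e).card :=
          Finset.card_pos.2 ⟨e₀, Finset.mem_filter.2 ⟨he₀, hv₀⟩⟩
      _ ≤ _ := Finset.le_sup (f := fun v => (E.filter fun e => v ∈ e).card) (Finset.mem_univ v₀)
  have hHd : Hreal d ≤ 1 + Real.logb 2 d := by
    rw [Hreal_eq_harmonic]
    refine le_trans (harmonic_le_one_add_log d) ?_
    have : Real.log d ≤ Real.logb 2 d := by
      rw [Real.logb, le_div_iff₀ (Real.log_pos (by norm_num))]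
      calc Real.log d * Real.log 2 ≤ Real.log d * 1 := by
            apply mul_le_mul_of_nonneg_left _ (Real.log_nonneg (by exact_mod_cast hd1))
            calc Real.log 2 ≤ Real.log (Real.exp 1) := by
                  apply Real.log_le_log (by norm_num)
                  linarith [Real.exp_one_gt_d9]
              _ = 1 := Real.log_exp 1
        _ = Real.log d := mul_one _
    linarith
  calc ∑ v : V, x v * Hreal ((E.filter fun e => v ∈ e).card)
      ≤ ∑ v : V, x v * (1 + Real.logb 2 d) := by
        apply Finset.sum_le_sum
        intro v _
        apply mul_le_mul_of_nonneg_left _ (hx v)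
        refine le_trans (Hreal_mono ?_) hHd
        rw [hd]; exact Finset.le_sup (f := fun v => (E.filter fun e => v ∈ e).card) (Finset.mem_univ v)
    _ = (∑ v : V, x v) * (1 + Real.logb 2 d) := by rw [← Finset.sum_mul]
end

section
/- Every finite graph G of order n with minimum degree δ(G) ≥ 1 has a total dominating set of size at most (n / δ(G)) · (1 + log₂ Δ(G)), where Δ(G) is the maximum degree of G. -/
/-!
Greedy domination. If `U` is the set of vertices not yet dominated, double counting
`∑_{u ∈ U} deg u ≥ |U| δ` over the `n` possible neighbours gives a vertex `w` adjacent to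
at least `|U| δ / n` (and at least one) vertices of `U`; we add `w` and recurse. With `c = n / δ`,
each step lowers the potential `x ↦ x` (for `x ≤ c`), `x ↦ c (1 + ln (x / c))` (for `x ≥ c`) of
`|U|` by at least one, so the greedy set has at most `c (1 + ln δ) ≤ c (1 + log₂ Δ)` vertices.
-/

open Finset Real

noncomputable def greedyCoverBound (c x : ℝ) : ℝ :=
  if x ≤ c then x else c * (1 + log (x / c))

lemma greedyCoverBound_le {c x : ℝ} (hcx : c ≤ x) :
    greedyCoverBound c x ≤ c * (1 + log (x / c)) := by
  unfold greedyCoverBound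
  split_ifs with hxc
  · obtain rfl : x = c := le_antisymm hxc hcx
    rcases eq_or_ne x 0 with rfl | hx
    · simp
    · simp [hx]
  · exact le_rfl

lemma greedyCoverBound_add_one_le {c x x' : ℝ} (hc : 0 < c) (hstep : 1 ≤ x - x')
    (hgain : x ≤ c * (x - x')) : greedyCoverBound c x' + 1 ≤ greedyCoverBound c x := by
  -- the potential has slope `min 1 (c / t) ≥ c / x` on `[x', x]`, and `x - x' ≥ x / c`
  unfold greedyCoverBound
  split_ifs with hx'c hxc hxc
  · linarith
  · have hx : 0 < x := by linarith
    have hlog : 1 - c / x ≤ log (x / c) := by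
      simpa only [inv_div] using one_sub_inv_le_log_of_pos (div_pos hx hc)
    have hgain' : 1 ≤ c / x * (x - x') := by rwa [div_mul_eq_mul_div, one_le_div hx]
    have hcx : c / x * x = c := div_mul_cancel₀ c hx.ne'
    nlinarith [mul_le_mul_of_nonneg_left hlog hc.le,
      mul_nonneg (sub_nonneg.2 hx'c) (sub_nonneg.2 ((div_le_one hx).2 (le_of_not_ge hxc)))]
  · linarith
  · have hx' : 0 < x' := by linarith
    have hx : 0 < x := by linarith
    have hlog : 1 - x' / x ≤ log (x / x') := by
      simpa only [inv_div] using one_sub_inv_le_log_of_pos (div_pos hx hx')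
    have hsplit : log (x / c) = log (x' / c) + log (x / x') := by
      rw [← log_mul (by positivity) (by positivity)]; congr 1; field_simp
    have hgain' : 1 ≤ c * (1 - x' / x) := by
      rwa [one_sub_div hx.ne', mul_div_assoc', le_div_iff₀ hx, one_mul]
    nlinarith [mul_le_mul_of_nonneg_left hlog hc.le]

lemma Real.log_le_logb_two {x : ℝ} (hx : 1 ≤ x) : log x ≤ logb 2 x :=
  le_div_self (log_nonneg hx) (log_pos one_lt_two) (by linarith [log_two_lt_d9])

namespace SimpleGraph

variable {V : Type*} [Fintype V] (G : SimpleGraph V) [DecidableRel G.Adj]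

lemma exists_card_mul_minDegree_le_card_mul_card_filter_adj [Nonempty V] (U : Finset V) :
    ∃ w, #U * G.minDegree ≤ Fintype.card V * #{u ∈ U | G.Adj u w} := by
  have hsum : ∑ u ∈ U, G.degree u = ∑ w, #{u ∈ U | G.Adj u w} := by
    simp_rw [← card_neighborFinset_eq_degree, neighborFinset_eq_filter]
    exact sum_card_bipartiteAbove_eq_sum_card_bipartiteBelow G.Adj
  have hle : ∑ _w : V, #U * G.minDegree ≤ ∑ w, Fintype.card V * #{u ∈ U | G.Adj u w} := by
    rw [sum_const, card_univ, smul_eq_mul, ← mul_sum, ← hsum]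
    gcongr
    simpa using card_nsmul_le_sum U _ _ fun u _ => G.minDegree_le_degree u
  obtain ⟨w, -, hw⟩ := exists_le_of_sum_le univ_nonempty hle
  exact ⟨w, hw⟩

lemma exists_adj_cover_card_le_greedyCoverBound [DecidableEq V] (hδ : 1 ≤ G.minDegree)
    (U : Finset V) :
    ∃ S : Finset V, (∀ u ∈ U, ∃ w ∈ S, G.Adj u w) ∧
      (#S : ℝ) ≤ greedyCoverBound (Fintype.card V / G.minDegree) #U := by
  induction U using Finset.strongInduction with | H U ih =>
  rcases U.eq_empty_or_nonempty with rfl | ⟨u₀, hu₀⟩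
  · exact ⟨∅, by simp, by simp [greedyCoverBound]; positivity⟩
  have : Nonempty V := ⟨u₀⟩
  obtain ⟨w, hw⟩ := G.exists_card_mul_minDegree_le_card_mul_card_filter_adj U
  have hK : 0 < #{u ∈ U | G.Adj u w} := by
    have : 0 < #U * G.minDegree := Nat.mul_pos (card_pos.2 ⟨u₀, hu₀⟩) hδ
    exact Nat.pos_of_mul_pos_left (this.trans_le hw)
  obtain ⟨u, hu⟩ := card_pos.1 hK
  have hsub : {u ∈ U | ¬G.Adj u w} ⊂ U :=
    filter_ssubset.2 ⟨u, (mem_filter.1 hu).1, not_not.2 (mem_filter.1 hu).2⟩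
  obtain ⟨S, hS, hScard⟩ := ih _ hsub
  refine ⟨insert w S, fun v hv => ?_, ?_⟩
  · by_cases hvw : G.Adj v w
    · exact ⟨w, mem_insert_self w S, hvw⟩
    · obtain ⟨w', hw', hvw'⟩ := hS v (mem_filter.2 ⟨hv, hvw⟩)
      exact ⟨w', mem_insert_of_mem hw', hvw'⟩
  have hsplit : (#U : ℝ) - #{u ∈ U | ¬G.Adj u w} = #{u ∈ U | G.Adj u w} := by
    rw [sub_eq_iff_eq_add, ← Nat.cast_add, card_filter_add_card_filter_not]
  have hδ' : (0 : ℝ) < G.minDegree := by exact_mod_cast hδ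
  have hstep := greedyCoverBound_add_one_le (c := Fintype.card V / G.minDegree)
    (x := #U) (x' := #{u ∈ U | ¬G.Adj u w}) (by positivity)
    (by rw [hsplit]; exact_mod_cast hK)
    (by rw [hsplit, div_mul_eq_mul_div, le_div_iff₀ hδ']; exact_mod_cast hw)
  calc (#(insert w S) : ℝ) ≤ #S + 1 := by exact_mod_cast card_insert_le w S
    _ ≤ _ := by linarith

end SimpleGraph

/-- Every finite graph of order `n` with minimum degree `δ(G) ≥ 1` has a
total dominating set of size at most `(n / δ(G)) * (1 + log₂ Δ(G))`. -/
theorem total_dominating_set_le_card_div_minDegree {V : Type*} [Fintype V] [DecidableEq V]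
    (G : SimpleGraph V) [DecidableRel G.Adj] (hδ : 1 ≤ G.minDegree) :
    ∃ S : Finset V, (∀ v : V, ∃ w ∈ S, G.Adj v w) ∧
      (S.card : ℝ) ≤ ((Fintype.card V : ℝ) / G.minDegree) * (1 + Real.logb 2 G.maxDegree) := by
  have : Nonempty V := by
    by_contra h
    rw [not_nonempty_iff] at h
    simp at hδ
  obtain ⟨S, hS, hScard⟩ := G.exists_adj_cover_card_le_greedyCoverBound hδ univ
  refine ⟨S, fun v => hS v (mem_univ v), hScard.trans ?_⟩
  have hn : (0 : ℝ) < Fintype.card V := by exact_mod_cast Fintype.card_pos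
  have hδ' : (1 : ℝ) ≤ G.minDegree := by exact_mod_cast hδ
  have hδΔ : (G.minDegree : ℝ) ≤ G.maxDegree := by exact_mod_cast G.minDegree_le_maxDegree
  calc greedyCoverBound (Fintype.card V / G.minDegree) #(univ : Finset V)
      ≤ Fintype.card V / G.minDegree * (1 + log G.minDegree) := by
        have := greedyCoverBound_le (c := Fintype.card V / G.minDegree) (x := Fintype.card V)
          (div_le_self hn.le hδ')
        rwa [div_div_cancel₀ hn.ne'] at this
    _ ≤ _ := by
        gcongr
        exact (log_le_log (by linarith) hδΔ).trans (log_le_logb_two (hδ'.trans hδΔ))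
end

section
/- Let G be a finite graph with minimum degree at least 1, and for each vertex u define s(u) = min{deg(v) : v ∈ N(u)}, the smallest degree among the neighbors of u. Then G has a total dominating set of size at most (1 + log₂ Δ(G)) · Σ_{u ∈ V(G)} 1/s(u), where Δ(G) is the maximum degree of G. -/
open Finset

private lemma harm_nonneg (m : ℕ) : (0 : ℝ) ≤ (harmonic m : ℝ) := by
  rcases Nat.eq_zero_or_pos m with h | h
  · simp [h]
  · exact_mod_cast (harmonic_pos (Nat.pos_iff_ne_zero.mp h)).le

private lemma harm_diff (b a k : ℕ) (hba : b ≤ a) (hak : a ≤ k) (hk : 1 ≤ k) :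
    ((a : ℝ) - b) / k ≤ (harmonic a : ℝ) - harmonic b := by
  have hsum : (harmonic a : ℝ) - harmonic b = ∑ i ∈ Finset.Ico b a, ((i : ℝ) + 1)⁻¹ := by
    unfold harmonic
    push_cast
    rw [Finset.sum_Ico_eq_sub (fun i => ((i : ℝ) + 1)⁻¹) hba]
  rw [hsum]
  have : ∀ i ∈ Finset.Ico b a, (k : ℝ)⁻¹ ≤ ((i : ℝ) + 1)⁻¹ := by
    intro i hi
    rw [Finset.mem_Ico] at hi
    have h1 : (0 : ℝ) < (i : ℝ) + 1 := by positivity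
    have h2 : (i : ℝ) + 1 ≤ k := by
      have : i + 1 ≤ k := le_trans hi.2 hak
      exact_mod_cast this
    exact inv_anti₀ h1 h2
  calc ((a : ℝ) - b) / k = (Finset.Ico b a).card * (k : ℝ)⁻¹ := by
        rw [Nat.card_Ico]
        have : ((a - b : ℕ) : ℝ) = (a : ℝ) - b := by
          have := hba; push_cast [this]; ring
        rw [this]; ring
    _ = ∑ _i ∈ Finset.Ico b a, (k : ℝ)⁻¹ := by rw [Finset.sum_const, nsmul_eq_mul]
    _ ≤ _ := Finset.sum_le_sum this

private lemma cover_aux {V : Type*} [Fintype V] [DecidableEq V] (G : SimpleGraph V)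
    [DecidableRel G.Adj]
    (hδ : ∀ v : V, 1 ≤ G.degree v) (s : V → ℕ)
    (hs_pos : ∀ u : V, 1 ≤ s u)
    (hs_le : ∀ u v : V, G.Adj u v → s u ≤ G.degree v) :
    ∀ n : ℕ, ∀ U : Finset V, U.card ≤ n → ∃ D : Finset V,
      (∀ u ∈ U, ∃ w ∈ D, G.Adj u w) ∧
      (D.card : ℝ) ≤ ∑ w : V, (1 / (s w : ℝ)) *
        (harmonic ((G.neighborFinset w ∩ U).card) : ℝ) := by
  intro n
  induction n with
  | zero =>
    intro U hU
    refine ⟨∅, ?_, ?_⟩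
    · intro u hu
      exact absurd (Finset.card_eq_zero.mp (Nat.le_zero.mp hU) ▸ hu) (Finset.notMem_empty u)
    · simp only [Finset.card_empty, Nat.cast_zero]
      refine Finset.sum_nonneg fun w _ => mul_nonneg (by positivity) (harm_nonneg _)
  | succ n ih =>
    intro U hU
    rcases Finset.eq_empty_or_nonempty U with rfl | ⟨u₀, hu₀⟩
    · refine ⟨∅, by simp, ?_⟩
      simp only [Finset.card_empty, Nat.cast_zero]
      refine Finset.sum_nonneg fun w _ => mul_nonneg (by positivity) (harm_nonneg _)
    -- pick the greedy vertex w*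
    have hVne : (Finset.univ : Finset V).Nonempty := ⟨u₀, Finset.mem_univ u₀⟩
    obtain ⟨wstar, -, hmax⟩ := Finset.exists_max_image Finset.univ
      (fun w => (G.neighborFinset w ∩ U).card) hVne
    set k := (G.neighborFinset wstar ∩ U).card with hk_def
    have hmax' : ∀ w : V, (G.neighborFinset w ∩ U).card ≤ k :=
      fun w => hmax w (Finset.mem_univ w)
    -- k ≥ 1
    obtain ⟨v₀, hv₀⟩ : ∃ v, G.Adj u₀ v := by
      have := hδ u₀
      rw [← SimpleGraph.card_neighborFinset_eq_degree] at this
      obtain ⟨v, hv⟩ := Finset.card_pos.mp this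
      exact ⟨v, (SimpleGraph.mem_neighborFinset ..).mp hv⟩
    have hk1 : 1 ≤ k := by
      have hmem : u₀ ∈ G.neighborFinset v₀ ∩ U :=
        Finset.mem_inter.mpr ⟨(SimpleGraph.mem_neighborFinset ..).mpr hv₀.symm, hu₀⟩
      exact le_trans (Finset.card_pos.mpr ⟨u₀, hmem⟩) (hmax' v₀)
    set C := G.neighborFinset wstar ∩ U with hC_def
    set U' := U \ G.neighborFinset wstar with hU'_def
    have hU'card : U'.card ≤ n := by
      have hCU : C ⊆ U := Finset.inter_subset_right
      have : U'.card < U.card := by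
        obtain ⟨c, hc⟩ := Finset.card_pos.mp hk1
        refine Finset.card_lt_card ⟨Finset.sdiff_subset, fun hsub => ?_⟩
        have hcU' := hsub (hCU hc)
        rw [hU'_def, Finset.mem_sdiff] at hcU'
        exact hcU'.2 (Finset.mem_inter.mp hc).1
      omega
    obtain ⟨D', hD'cov, hD'card⟩ := ih U' hU'card
    refine ⟨insert wstar D', ?_, ?_⟩
    · intro u hu
      by_cases hadj : u ∈ G.neighborFinset wstar
      · exact ⟨wstar, Finset.mem_insert_self _ _,
          ((SimpleGraph.mem_neighborFinset ..).mp hadj).symm⟩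
      · obtain ⟨w, hw, hadj'⟩ := hD'cov u (Finset.mem_sdiff.mpr ⟨hu, hadj⟩)
        exact ⟨w, Finset.mem_insert_of_mem hw, hadj'⟩
    · -- cardinality bound
      have hcard : ((insert wstar D').card : ℝ) ≤ (D'.card : ℝ) + 1 := by
        exact_mod_cast Finset.card_insert_le _ _
      refine le_trans hcard ?_
      have key : (1 : ℝ) ≤ ∑ w : V, (1 / (s w : ℝ)) *
          ((harmonic ((G.neighborFinset w ∩ U).card) : ℝ) -
           (harmonic ((G.neighborFinset w ∩ U').card) : ℝ)) := by
        -- per-vertex: diff ≥ d_w / k where d_w = |N(w) ∩ C|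
        have step1 : ∀ w : V, ((G.neighborFinset w ∩ C).card : ℝ) / k ≤
            (harmonic ((G.neighborFinset w ∩ U).card) : ℝ) -
            (harmonic ((G.neighborFinset w ∩ U').card) : ℝ) := by
          intro w
          have hsplit : G.neighborFinset w ∩ U' =
              (G.neighborFinset w ∩ U) \ (G.neighborFinset w ∩ C) := by
            rw [hU'_def, hC_def]
            ext x
            simp only [Finset.mem_inter, Finset.mem_sdiff]
            tauto
          have hsub : G.neighborFinset w ∩ C ⊆ G.neighborFinset w ∩ U :=
            Finset.inter_subset_inter le_rfl Finset.inter_subset_right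
          have hcard' : (G.neighborFinset w ∩ U').card =
              (G.neighborFinset w ∩ U).card - (G.neighborFinset w ∩ C).card := by
            rw [hsplit, Finset.card_sdiff_of_subset hsub]
          have h1 : (G.neighborFinset w ∩ U').card ≤ (G.neighborFinset w ∩ U).card := by
            omega
          have h2 := harm_diff _ _ _ h1 (hmax' w) hk1
          refine le_trans (le_of_eq ?_) h2
          have hle := Finset.card_le_card hsub
          rw [hcard']
          push_cast [Nat.cast_sub hle]
          ring_nf
        have step2 : (k : ℝ) ≤ ∑ w : V, (1 / (s w : ℝ)) *
            ((G.neighborFinset w ∩ C).card : ℝ) := by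
          have hswap : ∑ w : V, (1 / (s w : ℝ)) * ((G.neighborFinset w ∩ C).card : ℝ)
              = ∑ u ∈ C, ∑ w : V, if G.Adj w u then 1 / (s w : ℝ) else 0 := by
            rw [Finset.sum_comm]
            refine Finset.sum_congr rfl fun w _ => ?_
            have : ((G.neighborFinset w ∩ C).card : ℝ)
                = ∑ u ∈ C, if G.Adj w u then (1 : ℝ) else 0 := by
              rw [Finset.sum_boole]
              congr 1
              rw [Finset.inter_comm]
              congr 1
              ext x
              simp [SimpleGraph.mem_neighborFinset]
            rw [this, Finset.mul_sum]
            refine Finset.sum_congr rfl fun u _ => ?_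
            by_cases h : G.Adj w u <;> simp [h]
          rw [hswap]
          have hinner : ∀ u ∈ C, (1 : ℝ) ≤ ∑ w : V, if G.Adj w u then 1 / (s w : ℝ) else 0 := by
            intro u _
            have hfilter : ∑ w : V, (if G.Adj w u then 1 / (s w : ℝ) else 0)
                = ∑ w ∈ G.neighborFinset u, 1 / (s w : ℝ) := by
              rw [← Finset.sum_filter]
              congr 1
              ext w
              simp [SimpleGraph.mem_neighborFinset, SimpleGraph.adj_comm]
            rw [hfilter]
            have hterm : ∀ w ∈ G.neighborFinset u, (1 : ℝ) / (G.degree u : ℝ) ≤ 1 / (s w : ℝ) := by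
              intro w hw
              have hadj : G.Adj w u := ((SimpleGraph.mem_neighborFinset ..).mp hw).symm
              have hle : s w ≤ G.degree u := hs_le w u hadj
              have hpos : (0 : ℝ) < (s w : ℝ) := by exact_mod_cast hs_pos w
              exact one_div_le_one_div_of_le hpos (by exact_mod_cast hle)
            calc (1 : ℝ) = (G.degree u : ℝ) * (1 / (G.degree u : ℝ)) := by
                  have : (0 : ℝ) < (G.degree u : ℝ) := by exact_mod_cast hδ u
                  field_simp
              _ = ∑ _w ∈ G.neighborFinset u, (1 : ℝ) / (G.degree u : ℝ) := by
                  rw [Finset.sum_const, nsmul_eq_mul, SimpleGraph.card_neighborFinset_eq_degree]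
              _ ≤ _ := Finset.sum_le_sum hterm
          calc (k : ℝ) = ∑ _u ∈ C, (1 : ℝ) := by
                rw [Finset.sum_const, nsmul_eq_mul, mul_one, hk_def, hC_def]
            _ ≤ _ := Finset.sum_le_sum hinner
        have hkpos : (0 : ℝ) < k := by exact_mod_cast hk1
        calc (1 : ℝ) = (k : ℝ) / k := by field_simp
          _ ≤ (∑ w : V, (1 / (s w : ℝ)) * ((G.neighborFinset w ∩ C).card : ℝ)) / k := by
              gcongr
          _ ≤ _ := by
              rw [Finset.sum_div]
              refine Finset.sum_le_sum fun w _ => ?_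
              rw [mul_div_assoc]
              refine mul_le_mul_of_nonneg_left (step1 w) (by positivity)
      have : (D'.card : ℝ) + 1 ≤
          (∑ w : V, (1 / (s w : ℝ)) * (harmonic ((G.neighborFinset w ∩ U').card) : ℝ)) +
          ∑ w : V, (1 / (s w : ℝ)) *
            ((harmonic ((G.neighborFinset w ∩ U).card) : ℝ) -
             (harmonic ((G.neighborFinset w ∩ U').card) : ℝ)) :=
        add_le_add hD'card key
      refine le_trans this (le_of_eq ?_)
      rw [← Finset.sum_add_distrib]
      refine Finset.sum_congr rfl fun w _ => by ring

/-- If `G` has minimum degree at least 1 and `s u` is the smallest degree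
among the neighbors of `u`, then `G` has a total dominating set of size at most
`(1 + log₂ Δ(G)) * ∑ u, 1 / s(u)`. -/
theorem total_dominating_set_le_sum_inv_min_neighbor_degree {V : Type*} [Fintype V]
    [DecidableEq V] (G : SimpleGraph V) [DecidableRel G.Adj]
    (hδ : ∀ v : V, 1 ≤ G.degree v)
    (s : V → ℕ)
    (hs_le : ∀ u v : V, G.Adj u v → s u ≤ G.degree v)
    (hs_mem : ∀ u : V, ∃ v : V, G.Adj u v ∧ s u = G.degree v) :
    ∃ S : Finset V, (∀ v : V, ∃ w ∈ S, G.Adj v w) ∧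
      (S.card : ℝ) ≤ (1 + Real.logb 2 G.maxDegree) * ∑ u : V, (1 : ℝ) / s u := by
  have hs_pos : ∀ u : V, 1 ≤ s u := by
    intro u
    obtain ⟨v, _, hv⟩ := hs_mem u
    rw [hv]; exact hδ v
  obtain ⟨D, hcov, hcard⟩ := cover_aux G hδ s hs_pos hs_le (Finset.univ.card) Finset.univ le_rfl
  refine ⟨D, fun v => hcov v (Finset.mem_univ v), le_trans hcard ?_⟩
  have hterm : ∀ w : V, (1 / (s w : ℝ)) * (harmonic ((G.neighborFinset w ∩ Finset.univ).card) : ℝ)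
      ≤ (1 + Real.logb 2 G.maxDegree) * (1 / (s w : ℝ)) := by
    intro w
    rw [Finset.inter_univ, SimpleGraph.card_neighborFinset_eq_degree]
    rw [mul_comm ((1 : ℝ) + Real.logb 2 G.maxDegree) _]
    refine mul_le_mul_of_nonneg_left ?_ (by positivity)
    have hdeg1 : 1 ≤ G.degree w := hδ w
    have hΔ : G.degree w ≤ G.maxDegree := G.degree_le_maxDegree w
    calc (harmonic (G.degree w) : ℝ) ≤ 1 + Real.log (G.degree w) :=
          harmonic_le_one_add_log _
      _ ≤ 1 + Real.logb 2 (G.degree w) := by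
          have hlog0 : 0 ≤ Real.log (G.degree w) :=
            Real.log_nonneg (by exact_mod_cast hdeg1)
          have h2 : Real.log 2 ≤ 1 := by
            rw [← Real.log_exp 1]
            exact Real.log_le_log (by norm_num) (by
              have := Real.exp_one_gt_d9; linarith)
          have h2pos : 0 < Real.log 2 := Real.log_pos (by norm_num)
          have : Real.log (G.degree w) ≤ Real.log (G.degree w) / Real.log 2 := by
            rw [le_div_iff₀ h2pos]
            nlinarith
          unfold Real.logb
          linarith
      _ ≤ 1 + Real.logb 2 G.maxDegree := by
          have hdpos : (0 : ℝ) < (G.degree w : ℝ) := by exact_mod_cast hδ w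
          have : Real.logb 2 (G.degree w) ≤ Real.logb 2 G.maxDegree :=
            Real.logb_le_logb_of_le (by norm_num) hdpos (by exact_mod_cast hΔ)
          linarith
  calc (∑ w : V, (1 / (s w : ℝ)) * (harmonic ((G.neighborFinset w ∩ Finset.univ).card) : ℝ))
      ≤ ∑ w : V, (1 + Real.logb 2 G.maxDegree) * (1 / (s w : ℝ)) :=
        Finset.sum_le_sum fun w _ => hterm w
    _ = (1 + Real.logb 2 G.maxDegree) * ∑ u : V, (1 : ℝ) / s u := by
        rw [Finset.mul_sum]
end

section
/- Let G be a finite graph of order n with minimum degree at least 1, let ω ≥ 1 be a real number, and let M be the number of vertices of G of degree at most √n / ω. Then G has a total dominating set of size at most (1 + log₂ Δ(G)) · (ω·√n + M), where Δ(G) is the maximum degree of G. -/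
open Finset

set_option maxHeartbeats 1000000 in
lemma greedy_cover {V : Type*} [Fintype V] [DecidableEq V]
    (G : SimpleGraph V) [DecidableRel G.Adj] (q : ℝ) (hq : 1 < q) :
    ∀ (k : ℕ) (U : Finset V), U.card = k →
      (∀ v ∈ U, (Fintype.card V : ℝ) < q * G.degree v) →
      ∃ S : Finset V, (∀ v ∈ U, ∃ w ∈ S, G.Adj v w) ∧ S.card ≤ U.card ∧
        (S.card : ℝ) ≤ q * (1 + Real.logb 2 (max 1 (U.card / q))) := by
  have hq0 : (0:ℝ) < q := lt_trans one_pos hq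
  have hlog2pos : (0:ℝ) < Real.log 2 := Real.log_pos one_lt_two
  have hlog2le : Real.log 2 ≤ 1 := by
    have := Real.log_le_sub_one_of_pos (x := 2) (by norm_num); linarith
  intro k
  induction k using Nat.strong_induction_on with
  | _ k ih =>
  intro U hUk hdeg
  rcases U.eq_empty_or_nonempty with rfl | hU
  · refine ⟨∅, by simp, by simp, ?_⟩
    simp only [Finset.card_empty, Nat.cast_zero, zero_div]
    rw [max_eq_left zero_le_one, Real.logb_one]
    nlinarith
  -- nonempty case
  have hm1 : 1 ≤ U.card := hU.card_pos
  -- double counting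
  have double : ∑ u : V, (U.filter (fun v => G.Adj v u)).card = ∑ v ∈ U, G.degree v := by
    simp only [Finset.card_filter]
    rw [Finset.sum_comm]
    refine Finset.sum_congr rfl fun v hv => ?_
    rw [← Finset.card_filter]
    simp [SimpleGraph.degree, SimpleGraph.neighborFinset_eq_filter]
  have doubleR : ∑ u : V, ((U.filter (fun v => G.Adj v u)).card : ℝ) = ∑ v ∈ U, (G.degree v : ℝ) := by
    exact_mod_cast double
  obtain ⟨u, -, hu⟩ : ∃ u ∈ Finset.univ, (U.card : ℝ) < q * ((U.filter (fun v => G.Adj v u)).card : ℝ) := by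
    apply Finset.exists_lt_of_sum_lt
    have h1 : ∑ v ∈ U, ((Fintype.card V : ℝ)) < ∑ v ∈ U, q * (G.degree v : ℝ) :=
      Finset.sum_lt_sum_of_nonempty hU hdeg
    rw [Finset.sum_const, nsmul_eq_mul, ← Finset.mul_sum] at h1
    rw [Finset.sum_const, nsmul_eq_mul, ← Finset.mul_sum, doubleR, Finset.card_univ]
    nlinarith [h1]
  set c : ℕ := (U.filter (fun v => G.Adj v u)).card with hc
  have hcm : c ≤ U.card := Finset.card_le_card (Finset.filter_subset _ _)
  have hc1 : 1 ≤ c := by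
    by_contra h
    have hc0 : c = 0 := by omega
    rw [hc0] at hu
    have : (0:ℝ) ≤ (U.card : ℝ) := Nat.cast_nonneg _
    simp at hu
    linarith
  set U' : Finset V := U.filter (fun v => ¬ G.Adj v u) with hU'
  have hsplit : c + U'.card = U.card :=
    Finset.card_filter_add_card_filter_not (fun v => G.Adj v u)
  have hlt : U'.card < k := by omega
  have hstep : U'.card + 1 ≤ U.card := by omega
  have hm'le : U'.card ≤ U.card := by omega
  obtain ⟨S', hS'cov, hS'card, hS'bound⟩ :=
    ih U'.card hlt U' rfl (fun v hv => hdeg v (Finset.mem_of_mem_filter v hv))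
  have hm'c : (U'.card : ℝ) = (U.card : ℝ) - c := by
    have := congrArg (Nat.cast : ℕ → ℝ) hsplit
    push_cast at this
    linarith
  have hcard : ((insert u S').card : ℝ) ≤ (S'.card : ℝ) + 1 := by
    exact_mod_cast Finset.card_insert_le _ _
  refine ⟨insert u S', ?_, ?_, ?_⟩
  · intro v hv
    by_cases hadj : G.Adj v u
    · exact ⟨u, Finset.mem_insert_self u S', hadj⟩
    · obtain ⟨w, hw, hadj'⟩ := hS'cov v (Finset.mem_filter.mpr ⟨hv, hadj⟩)
      exact ⟨w, Finset.mem_insert_of_mem hw, hadj'⟩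
  · calc (insert u S').card ≤ S'.card + 1 := Finset.card_insert_le _ _
      _ ≤ U'.card + 1 := Nat.add_le_add_right hS'card 1
      _ ≤ U.card := hstep
  -- the analytic bound
  clear ih hdeg hS'cov double doubleR hUk hlt
  by_cases hA : q ≤ (U'.card : ℝ)
  · -- main case: recursive bound, log decreases by ≥ 1/q
    have hqm : q ≤ (U.card : ℝ) := le_trans hA (by exact_mod_cast hm'le)
    have hmax' : max 1 ((U'.card:ℝ)/q) = (U'.card:ℝ)/q := max_eq_right ((one_le_div hq0).mpr hA)
    have hmax : max 1 ((U.card:ℝ)/q) = (U.card:ℝ)/q := max_eq_right ((one_le_div hq0).mpr hqm)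
    rw [hmax]
    rw [hmax'] at hS'bound
    have hfac : (0:ℝ) < 1 - 1/q := by
      rw [sub_pos]
      exact (div_lt_one hq0).mpr hq
    have hm'pos : (0:ℝ) < (U'.card : ℝ) := lt_of_lt_of_le hq0 hA
    have hmpos : (0:ℝ) < (U.card : ℝ) := lt_of_lt_of_le hq0 hqm
    have hcq : (U.card:ℝ)/q < c := by
      rw [div_lt_iff₀ hq0]; nlinarith [hu]
    have hle : (U'.card:ℝ)/q ≤ ((U.card:ℝ)/q) * (1 - 1/q) := by
      rw [hm'c, div_le_iff₀ hq0]
      have hRq : (((U.card:ℝ)/q) * (1 - 1/q)) * q = (U.card:ℝ) * (1 - 1/q) := by field_simp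
      have hexp : (U.card:ℝ) * (1 - 1/q) = (U.card:ℝ) - (U.card:ℝ)/q := by ring
      rw [hRq, hexp]
      linarith [hcq]
    have hlogle : Real.logb 2 ((U'.card:ℝ)/q) ≤ Real.logb 2 (((U.card:ℝ)/q) * (1 - 1/q)) := by
      rw [Real.logb_le_logb one_lt_two (by positivity) (by positivity)]
      exact hle
    have hmul : Real.logb 2 (((U.card:ℝ)/q) * (1 - 1/q))
        = Real.logb 2 ((U.card:ℝ)/q) + Real.logb 2 (1 - 1/q) :=
      Real.logb_mul (by positivity) (ne_of_gt hfac)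
    have hlog1q : Real.logb 2 (1 - 1/q) ≤ -(1/q) / Real.log 2 := by
      rw [← Real.log_div_log]
      have h2 := Real.log_le_sub_one_of_pos hfac
      rw [div_le_div_iff_of_pos_right hlog2pos]
      linarith
    set a := Real.logb 2 ((U.card:ℝ)/q) with ha
    set b := Real.logb 2 ((U'.card:ℝ)/q) with hb
    have hS'b : (S'.card:ℝ) ≤ q + q * b := by
      rw [mul_add, mul_one] at hS'bound; exact hS'bound
    have hab : q * b ≤ q * a + q * Real.logb 2 (1 - 1/q) := by
      have := mul_le_mul_of_nonneg_left (hlogle.trans (le_of_eq hmul)) hq0.le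
      rw [mul_add] at this
      exact this
    have h1q : q * (-(1/q) / Real.log 2) = -(1 / Real.log 2) := by field_simp
    have hq_log1q : q * Real.logb 2 (1 - 1/q) ≤ -(1 / Real.log 2) := by
      rw [← h1q]
      exact mul_le_mul_of_nonneg_left hlog1q hq0.le
    have hone : (1:ℝ) ≤ 1 / Real.log 2 := by
      rw [le_div_iff₀ hlog2pos]; linarith
    rw [mul_add, mul_one]
    linarith
  · -- U' is small
    push_neg at hA
    have hS'm : (S'.card : ℝ) ≤ (U'.card : ℝ) := by exact_mod_cast hS'card
    by_cases hB0 : (U.card : ℝ) ≤ q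
    · have hnat : (insert u S').card ≤ U.card :=
        le_trans (Finset.card_insert_le _ _) (by omega)
      have hnatR : ((insert u S').card : ℝ) ≤ (U.card : ℝ) := by exact_mod_cast hnat
      have hlogmax : 0 ≤ Real.logb 2 (max 1 ((U.card:ℝ)/q)) :=
        Real.logb_nonneg one_lt_two (le_max_left _ _)
      rw [mul_add, mul_one]
      linarith only [hnatR, hB0, mul_nonneg hq0.le hlogmax]
    · push_neg at hB0
      have ht1 : (1:ℝ) < (U.card:ℝ)/q := (one_lt_div hq0).mpr hB0
      have hmax : max 1 ((U.card:ℝ)/q) = (U.card:ℝ)/q := max_eq_right ht1.le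
      rw [hmax, mul_add, mul_one]
      set t := (U.card:ℝ)/q with hts
      have ht0 : (0:ℝ) < t := lt_trans one_pos ht1
      have htq : (U.card:ℝ) = q * t := by
        rw [hts]; field_simp
      by_cases hB1 : 1/q ≤ Real.logb 2 t
      · have h2 : q * (1/q) ≤ q * Real.logb 2 t := mul_le_mul_of_nonneg_left hB1 hq0.le
        have hq1 : q * (1/q) = 1 := by field_simp
        linarith
      · push_neg at hB1
        have hlogt : Real.log t < Real.log 2 / q := by
          rw [← Real.log_div_log] at hB1
          rw [div_lt_iff₀ hlog2pos] at hB1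
          calc Real.log t < 1/q * Real.log 2 := hB1
            _ = Real.log 2 / q := by ring
        have hq2 : (0:ℝ) < 1 - Real.log 2 / q := by
          have : Real.log 2 / q < 1 := by
            rw [div_lt_one hq0]; linarith
          linarith
        have hkey : Real.log (1 - Real.log 2 / q) ≤ -(Real.log 2 / q) := by
          have := Real.log_le_sub_one_of_pos hq2; linarith
        have htlt : t < (1 - Real.log 2 / q)⁻¹ := by
          have h3 : Real.log t < Real.log ((1 - Real.log 2 / q)⁻¹) := by
            rw [Real.log_inv]; linarith
          exact (Real.log_lt_log_iff ht0 (by positivity)).mp h3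
        have hintense : t * (q - Real.log 2) < q := by
          have h4 : t * (1 - Real.log 2 / q) < 1 := by
            have h5 := mul_lt_mul_of_pos_right htlt hq2
            rw [inv_mul_cancel₀ (ne_of_gt hq2)] at h5
            exact h5
          have h6 : t * (1 - Real.log 2 / q) * q = t * (q - Real.log 2) := by
            field_simp
          have h5b := mul_lt_mul_of_pos_right h4 hq0
          rw [h6, one_mul] at h5b
          exact h5b
        have hlogtb : 1 - 1/t ≤ Real.log t := by
          have h6 := Real.log_le_sub_one_of_pos (x := t⁻¹) (inv_pos.mpr ht0)
          rw [Real.log_inv] at h6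
          rw [one_div]
          linarith
        have hcq : t < (c:ℝ) :=
          lt_of_mul_lt_mul_left (by rw [← htq]; exact hu) hq0.le
        have hScard : ((insert u S').card : ℝ) ≤ 1 + q * t - t := by
          have h7 : (S'.card:ℝ) ≤ (U.card:ℝ) - c := by
            rw [← hm'c]; exact hS'm
          linarith [hcard, htq]
        have h7 : t - 1 ≤ t * Real.log t := by
          have h7a := mul_le_mul_of_nonneg_left hlogtb ht0.le
          have h7b : t * (1 - 1/t) = t - 1 := by field_simp
          linarith [h7a, h7b]
        have h8 : (q-1) * t * Real.log 2 ≤ q := by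
          have hpr : (t*q) * Real.log 2 ≤ (t*q) * 1 :=
            mul_le_mul_of_nonneg_left hlog2le (mul_pos ht0 hq0).le
          nlinarith [hintense, hpr]
        have hgoal2 : (t-1) * (q-1) * Real.log 2 ≤ q * Real.log t := by
          have h9 := mul_le_mul_of_nonneg_left h8 (sub_nonneg.mpr ht1.le)
          have h10 := mul_le_mul_of_nonneg_left h7 hq0.le
          have hXt : ((t-1)*(q-1)*Real.log 2) * t ≤ (q * Real.log t) * t := by
            nlinarith [h9, h10]
          exact le_of_mul_le_mul_right hXt ht0
        rw [← Real.log_div_log]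
        have h11 : (t-1)*(q-1) ≤ q * Real.log t / Real.log 2 := by
          rw [le_div_iff₀ hlog2pos]
          linarith [hgoal2]
        have h12 : (t-1)*(q-1) = q*t - t - q + 1 := by ring
        have h13 : q * (Real.log t / Real.log 2) = q * Real.log t / Real.log 2 := by ring
        rw [h13]
        linarith

/-- If `G` has order `n`, minimum degree at least 1, `ω ≥ 1` is real, and
`M` is the number of vertices of degree at most `√n / ω`, then `G` has a total dominating
set of size at most `(1 + log₂ Δ(G)) * (ω √n + M)`. -/
theorem total_dominating_set_of_few_small_degree {V : Type*} [Fintype V] [DecidableEq V]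
    (G : SimpleGraph V) [DecidableRel G.Adj] (n : ℕ) (hn : Fintype.card V = n)
    (hδ : ∀ v : V, 1 ≤ G.degree v) (ω : ℝ) (hω : 1 ≤ ω)
    (M : ℕ) (hM : M = {v : V | (G.degree v : ℝ) ≤ Real.sqrt n / ω}.ncard) :
    ∃ S : Finset V, (∀ v : V, ∃ w ∈ S, G.Adj v w) ∧
      (S.card : ℝ) ≤ (1 + Real.logb 2 G.maxDegree) * (ω * Real.sqrt n + M) := by
  classical
  rcases Nat.eq_zero_or_pos n with hn0 | hnpos
  · -- V is empty
    subst hn0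
    have hVempty : IsEmpty V := Fintype.card_eq_zero_iff.mp hn
    haveI := hVempty
    have hM0 : M = 0 := by
      rw [hM, Set.eq_empty_of_isEmpty {v : V | (G.degree v : ℝ) ≤ Real.sqrt ((0:ℕ):ℝ) / ω},
        Set.ncard_empty]
    refine ⟨∅, fun v => absurd (Fintype.card_pos_iff.mpr ⟨v⟩) (by simp [hn]), ?_⟩
    simp [hM0]
  · -- V nonempty
    have hVne : Nonempty V := Fintype.card_pos_iff.mp (by rw [hn]; omega)
    obtain ⟨v₀⟩ := hVne
    have hn2 : 2 ≤ n := by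
      have h1 := hδ v₀
      have h2 := G.degree_lt_card_verts v₀
      omega
    have hω0 : (0:ℝ) < ω := lt_of_lt_of_le one_pos hω
    have hnR : (2:ℝ) ≤ (n:ℝ) := by exact_mod_cast hn2
    have hsq : (1:ℝ) < Real.sqrt n := by
      rw [show (1:ℝ) = Real.sqrt 1 from (Real.sqrt_one).symm]
      exact Real.sqrt_lt_sqrt zero_le_one (by linarith)
    set q : ℝ := ω * Real.sqrt n with hqdef
    have hq : 1 < q := by
      calc (1:ℝ) < Real.sqrt n := hsq
        _ = 1 * Real.sqrt n := (one_mul _).symm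
        _ ≤ ω * Real.sqrt n := by
            apply mul_le_mul_of_nonneg_right hω (Real.sqrt_nonneg _)
    have hq0 : (0:ℝ) < q := lt_trans one_pos hq
    have hss : Real.sqrt n * Real.sqrt n = (n:ℝ) := Real.mul_self_sqrt (Nat.cast_nonneg n)
    have hkey : q * (Real.sqrt n / ω) = n := by
      rw [hqdef]
      rw [show ω * Real.sqrt (n:ℝ) * (Real.sqrt (n:ℝ) / ω)
          = (Real.sqrt (n:ℝ) * Real.sqrt (n:ℝ)) * (ω / ω) by ring]
      rw [div_self (ne_of_gt hω0), mul_one, hss]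
    -- the high-degree vertices
    set A : Finset V := Finset.univ.filter (fun v => (Fintype.card V : ℝ) < q * G.degree v)
      with hAdef
    obtain ⟨S₁, hS₁cov, hS₁card, hS₁bound⟩ := greedy_cover G q hq A.card A rfl
      (fun v hv => (Finset.mem_filter.mp hv).2)
    -- the low-degree vertices
    set Sm : Finset V := Finset.univ.filter (fun v => (G.degree v : ℝ) ≤ Real.sqrt n / ω)
      with hSmdef
    have hMS : M = Sm.card := by
      rw [hM, hSmdef]
      rw [Set.ncard_eq_toFinset_card']
      congr 1
      ext v
      simp
    -- choice of neighbors
    have hnb : ∀ v : V, ∃ w, G.Adj v w := by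
      intro v
      have h1 := hδ v
      have h2 : (G.neighborFinset v).Nonempty := Finset.card_pos.mp (by
        rw [G.card_neighborFinset_eq_degree]; omega)
      obtain ⟨w, hw⟩ := h2
      exact ⟨w, (SimpleGraph.mem_neighborFinset _ _ _).mp hw⟩
    choose f hf using hnb
    refine ⟨S₁ ∪ Sm.image f, ?_, ?_⟩
    · intro v
      by_cases hv : v ∈ A
      · obtain ⟨w, hw, hadj⟩ := hS₁cov v hv
        exact ⟨w, Finset.mem_union_left _ hw, hadj⟩
      · have hvS : v ∈ Sm := by
          rw [hSmdef]
          simp only [Finset.mem_filter, Finset.mem_univ, true_and]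
          rw [hAdef] at hv
          simp only [Finset.mem_filter, Finset.mem_univ, true_and, not_lt] at hv
          rw [hn] at hv
          -- hv : q * degree v ≤ n = q * (√n/ω)
          have := hv.trans (le_of_eq hkey.symm)
          exact le_of_mul_le_mul_left this hq0
        exact ⟨f v, Finset.mem_union_right _ (Finset.mem_image_of_mem f hvS), hf v⟩
    · -- cardinality bound
      have hcard1 : ((S₁ ∪ Sm.image f).card : ℝ) ≤ (S₁.card : ℝ) + M := by
        have h1 : (S₁ ∪ Sm.image f).card ≤ S₁.card + (Sm.image f).card :=
          Finset.card_union_le _ _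
        have h2 : (Sm.image f).card ≤ Sm.card := Finset.card_image_le
        have : (S₁ ∪ Sm.image f).card ≤ S₁.card + M := by omega
        exact_mod_cast this
      -- maxDegree ≥ 1
      have hΔ1 : 1 ≤ G.maxDegree := le_trans (hδ v₀) (G.degree_le_maxDegree v₀)
      have hΔ1R : (1:ℝ) ≤ (G.maxDegree : ℝ) := by exact_mod_cast hΔ1
      have hLΔ : 0 ≤ Real.logb 2 (G.maxDegree : ℝ) := Real.logb_nonneg one_lt_two hΔ1R
      -- max 1 (A.card/q) ≤ maxDegree
      have hmaxle : max 1 ((A.card : ℝ)/q) ≤ (G.maxDegree : ℝ) := by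
        rcases A.eq_empty_or_nonempty with hAe | hAne
        · rw [hAe]
          simp only [Finset.card_empty, Nat.cast_zero, zero_div]
          rw [max_eq_left (by norm_num)]
          exact hΔ1R
        · obtain ⟨a, ha⟩ := hAne
          have hda : (Fintype.card V : ℝ) < q * G.degree a := by
            rw [hAdef] at ha
            exact (Finset.mem_filter.mp ha).2
          rw [hn] at hda
          have hdega : Real.sqrt n / ω < (G.degree a : ℝ) := by
            rw [← hkey] at hda
            exact lt_of_mul_lt_mul_left hda hq0.le
          have hdegaΔ : (G.degree a : ℝ) ≤ (G.maxDegree : ℝ) := by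
            exact_mod_cast G.degree_le_maxDegree a
          have hAn : (A.card : ℝ) ≤ (n : ℝ) := by
            rw [← hn]; exact_mod_cast Finset.card_le_univ A
          have hAq : (A.card : ℝ)/q ≤ Real.sqrt n / ω := by
            rw [div_le_iff₀ hq0]
            calc (A.card : ℝ) ≤ (n : ℝ) := hAn
              _ = q * (Real.sqrt n / ω) := hkey.symm
              _ = Real.sqrt (n:ℝ) / ω * q := by ring
          exact max_le hΔ1R (hAq.trans (le_of_lt (hdega.trans_le hdegaΔ)))
      have hlogle : Real.logb 2 (max 1 ((A.card : ℝ)/q)) ≤ Real.logb 2 (G.maxDegree : ℝ) := by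
        rw [Real.logb_le_logb one_lt_two (lt_of_lt_of_le one_pos (le_max_left _ _)) (by linarith)]
        exact hmaxle
      have hbound : (S₁.card : ℝ) ≤ q * (1 + Real.logb 2 (G.maxDegree : ℝ)) := by
        calc (S₁.card : ℝ) ≤ q * (1 + Real.logb 2 (max 1 ((A.card : ℝ)/q))) := hS₁bound
          _ ≤ q * (1 + Real.logb 2 (G.maxDegree : ℝ)) := by
              apply mul_le_mul_of_nonneg_left (by linarith) hq0.le
      -- assemble
      have hMnn : (0:ℝ) ≤ (M:ℝ) := Nat.cast_nonneg _
      calc ((S₁ ∪ Sm.image f).card : ℝ) ≤ (S₁.card : ℝ) + M := hcard1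
        _ ≤ q * (1 + Real.logb 2 (G.maxDegree : ℝ)) + M := by linarith
        _ ≤ (1 + Real.logb 2 (G.maxDegree : ℝ)) * (q + M) := by nlinarith [hLΔ, hMnn, hq0]
        _ = (1 + Real.logb 2 G.maxDegree) * (ω * Real.sqrt n + M) := by rw [hqdef]
end

section
/- Let G be a finite graph of girth at least 5 (equivalently, G contains no cycle of length 3 or 4). Let D and k be nonnegative integers such that at most k vertices of G have degree less than D, and let C be a finite set of vertices with |C| ≤ D − k − 1. Then for every vertex u ∉ C with deg(u) ≥ D, there exists a neighbor w of u such that deg(w) ≥ D, w ∉ C, and w is not adjacent to any vertex of C. -/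
lemma cyc3 {V : Type*} (G : SimpleGraph V) {a b c : V}
    (hab : G.Adj a b) (hbc : G.Adj b c) (hca : G.Adj c a) :
    ∃ w : G.Walk a a, w.IsCycle ∧ w.length = 3 := by
  refine ⟨.cons hab (.cons hbc (.cons hca .nil)), ?_, rfl⟩
  have := hab.ne; have := hbc.ne; have := hca.ne
  simp_all [SimpleGraph.Walk.isCycle_def, SimpleGraph.Walk.isTrail_def, Sym2.eq_iff]
  aesop

lemma cyc4 {V : Type*} (G : SimpleGraph V) {a b c d : V}
    (hab : G.Adj a b) (hbc : G.Adj b c) (hcd : G.Adj c d) (hda : G.Adj d a)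
    (hac : a ≠ c) (hbd : b ≠ d) :
    ∃ w : G.Walk a a, w.IsCycle ∧ w.length = 4 := by
  refine ⟨.cons hab (.cons hbc (.cons hcd (.cons hda .nil))), ?_, rfl⟩
  have := hab.ne; have := hbc.ne; have := hcd.ne; have := hda.ne
  simp_all [SimpleGraph.Walk.isCycle_def, SimpleGraph.Walk.isTrail_def, Sym2.eq_iff]
  aesop

/-- In a graph of girth at least 5, if at most `k` vertices have degree
less than `D` and `C` is a set of vertices with `|C| ≤ D - k - 1`, then every vertex
`u ∉ C` of degree at least `D` has a neighbor `w` of degree at least `D` with `w ∉ C`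
that is not adjacent to any vertex of `C`. -/
theorem robber_escape_girth_five {V : Type*} [Fintype V] [DecidableEq V]
    (G : SimpleGraph V) [DecidableRel G.Adj]
    (hgirth : ∀ (u : V) (c : G.Walk u u), c.IsCycle → c.length ≠ 3 ∧ c.length ≠ 4)
    (D k : ℕ)
    (hk : (Finset.univ.filter fun v : V => G.degree v < D).card ≤ k)
    (C : Finset V) (hC : (C.card : ℤ) ≤ (D : ℤ) - k - 1) :
    ∀ u : V, u ∉ C → D ≤ G.degree u →
      ∃ w : V, G.Adj u w ∧ D ≤ G.degree w ∧ w ∉ C ∧ ∀ c ∈ C, ¬ G.Adj w c := by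
  intro u huC hdu
  classical
  set B : V → Finset V := fun c => (G.neighborFinset u).filter (fun w => w = c ∨ G.Adj w c)
    with hB
  -- each B c has at most one element
  have hB1 : ∀ c ∈ C, (B c).card ≤ 1 := by
    intro c hc
    rw [Finset.card_le_one]
    intro w1 hw1 w2 hw2
    by_contra hne
    simp only [hB, Finset.mem_filter, SimpleGraph.mem_neighborFinset] at hw1 hw2
    obtain ⟨h1, h1'⟩ := hw1
    obtain ⟨h2, h2'⟩ := hw2
    have huc : u ≠ c := fun h => huC (h ▸ hc)
    rcases h1' with rfl | ha1 <;> rcases h2' with rfl | ha2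
    · exact hne rfl
    · -- w1 = c, w2 adj c : triangle u w2 c
      obtain ⟨w, hw, hl⟩ := cyc3 G h2 ha2 h1.symm
      exact (hgirth u w hw).1 hl
    · obtain ⟨w, hw, hl⟩ := cyc3 G h1 ha1 h2.symm
      exact (hgirth u w hw).1 hl
    · -- 4-cycle u w1 c w2
      obtain ⟨w, hw, hl⟩ := cyc4 G h1 ha1 ha2.symm h2.symm huc hne
      exact (hgirth u w hw).2 hl
  -- bad set
  set bad : Finset V := (G.neighborFinset u).filter
    (fun w => G.degree w < D ∨ w ∈ C ∨ ∃ c ∈ C, G.Adj w c) with hbad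
  have hsub : bad ⊆ (Finset.univ.filter fun v : V => G.degree v < D) ∪ C.biUnion B := by
    intro w hw
    simp only [hbad, Finset.mem_filter, SimpleGraph.mem_neighborFinset] at hw
    obtain ⟨hadj, hlow | hwC | ⟨c, hc, hwc⟩⟩ := hw
    · exact Finset.mem_union_left _ (by simp [hlow])
    · exact Finset.mem_union_right _ (Finset.mem_biUnion.2 ⟨w, hwC, by
        simp [hB, hadj]⟩)
    · exact Finset.mem_union_right _ (Finset.mem_biUnion.2 ⟨c, hc, by
        simp [hB, hadj, hwc]⟩)
  have hbadcard : bad.card ≤ k + C.card := by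
    calc bad.card ≤ _ := Finset.card_le_card hsub
    _ ≤ (Finset.univ.filter fun v : V => G.degree v < D).card + (C.biUnion B).card :=
        Finset.card_union_le _ _
    _ ≤ k + C.card := by
        refine Nat.add_le_add hk ?_
        calc (C.biUnion B).card ≤ ∑ c ∈ C, (B c).card := Finset.card_biUnion_le
        _ ≤ ∑ c ∈ C, 1 := Finset.sum_le_sum hB1
        _ = C.card := by simp
  have hlt : bad.card < (G.neighborFinset u).card := by
    rw [SimpleGraph.card_neighborFinset_eq_degree]
    omega
  have hne : ((G.neighborFinset u) \ bad).Nonempty := by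
    rw [← Finset.card_pos]
    have := Finset.le_card_sdiff bad (G.neighborFinset u)
    omega
  obtain ⟨w, hwmem⟩ := hne
  obtain ⟨hwn, hwbad⟩ := Finset.mem_sdiff.1 hwmem
  rw [SimpleGraph.mem_neighborFinset] at hwn
  simp only [hbad, Finset.mem_filter, SimpleGraph.mem_neighborFinset, not_and, not_or,
    not_exists, not_lt] at hwbad
  obtain ⟨hdw, hwC, hwc⟩ := hwbad hwn
  exact ⟨w, hwn, hdw, hwC, fun c hc => (hwc c hc)⟩
end

section
/- Let J be a finite bipartite graph with parts A and B, where |A| = a, every vertex of A has degree at least d with 1 ≤ d ≤ a, and no two distinct vertices of A have a common neighbor. Then J has at least C(a + d − 1, d − 1) pairwise non-isomorphic spanning subgraphs; that is, there is a family of at least C(a + d − 1, d − 1) subgraphs of J, all on the full vertex set of J, no two of which are isomorphic as graphs. -/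
/-!
For each `u ∈ A` fix `d` distinct neighbours `nb u 0, …, nb u (d - 1)`. A function `c : V → Fin d`
selects the spanning subgraph in which every `u ∈ A` keeps its edges to `nb u 0, …, nb u (c u)`.
Since `A` is independent and its vertices have no common neighbour, `u ∈ A` then has degree
`c u + 1` and every other vertex has degree at most `1`. So the number of vertices of degree at
least `k + 2`, an isomorphism invariant, is the number of `u ∈ A` with `c u ≥ k + 1`; together with
`|A| = a` these numbers determine the multiset of values of `c` on `A`. Every multiset of size `a`
over `Fin d` occurs, and by stars and bars there are `C(a + d - 1, d - 1)` of them.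
-/

open Finset Function SimpleGraph

theorem Finset.exists_map_val_eq {ι α : Type*} [Nonempty α] (s : Finset ι) (m : Multiset α)
    (hm : Multiset.card m = #s) : ∃ f : ι → α, s.val.map f = m := by
  classical
  induction s using Finset.induction_on generalizing m with
  | empty => exact ⟨fun _ => Classical.arbitrary α, by simp_all⟩
  | @insert x s hx ih =>
    obtain ⟨y, hy⟩ : ∃ y, y ∈ m := Multiset.card_pos_iff_exists_mem.mp (by simp [hm])
    obtain ⟨f, hf⟩ := ih (m.erase y) (by simp [Multiset.card_erase_of_mem hy, hm, hx])
    refine ⟨update f x y, ?_⟩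
    have hfs : s.val.map (update f x y) = s.val.map f :=
      Multiset.map_congr rfl fun u hu => update_of_ne (ne_of_mem_of_not_mem hu hx) _ _
    rw [insert_val_of_notMem hx, Multiset.map_cons, hfs, hf, update_self, Multiset.cons_erase hy]

theorem Multiset.eq_of_countP_le_eq {m m' : Multiset ℕ}
    (h : ∀ k, m.countP (k ≤ ·) = m'.countP (k ≤ ·)) : m = m' := by
  have hsplit (b : ℕ) (m : Multiset ℕ) :
      m.count b + m.countP (b + 1 ≤ ·) = m.countP (b ≤ ·) := by
    induction m using Multiset.induction_on with
    | empty => simp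
    | cons x m ih =>
      simp only [Multiset.count_cons, Multiset.countP_cons]
      split_ifs <;> omega
  ext b
  have := h b
  have := h (b + 1)
  have := hsplit b m
  have := hsplit b m'
  omega

theorem Sym.card_fin_eq_choose {d : ℕ} (hd : 1 ≤ d) (a : ℕ) :
    Fintype.card (Sym (Fin d) a) = (a + d - 1).choose (d - 1) := by
  obtain ⟨d, rfl⟩ := Nat.exists_eq_add_of_le' hd
  rw [Sym.card_sym_eq_choose, Fintype.card_fin, show d + 1 + a - 1 = d + a by omega,
    show a + (d + 1) - 1 = d + a by omega, Nat.add_sub_cancel, Nat.choose_symm_add]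

namespace SimpleGraph

variable {V : Type*}

theorem exists_injective_adj [Fintype V] {G : SimpleGraph V} [DecidableRel G.Adj] {u : V} {d : ℕ}
    (h : d ≤ G.degree u) : ∃ g : Fin d → V, Injective g ∧ ∀ i, G.Adj u (g i) := by
  obtain ⟨g⟩ : Nonempty (Fin d ↪ G.neighborSet u) :=
    Function.Embedding.nonempty_of_card_le (by rwa [Fintype.card_fin, card_neighborSet_eq_degree])
  exact ⟨fun i => g i, Subtype.val_injective.comp g.injective, fun i => (g i).2⟩

theorem Iso.card_le_degree_eq {W : Type*} [Fintype V] [Fintype W] {G : SimpleGraph V}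
    {G' : SimpleGraph W} [DecidableRel G.Adj] [DecidableRel G'.Adj] (f : G ≃g G') (k : ℕ) :
    #{v | k ≤ G.degree v} = #{w | k ≤ G'.degree w} :=
  card_equiv f.toEquiv fun v => by simp

variable {d : ℕ} (A : Finset V) (nb : V → Fin d → V)

def truncatedStars (c : V → Fin d) : SimpleGraph V :=
  fromRel fun u w => u ∈ A ∧ ∃ i ≤ c u, w = nb u i

instance [DecidableEq V] (c : V → Fin d) : DecidableRel (truncatedStars A nb c).Adj :=
  fun _ _ => decidable_of_iff' _ (fromRel_adj ..)

variable {A nb} {J : SimpleGraph V} (hnb : ∀ u ∈ A, Injective (nb u) ∧ ∀ i, J.Adj u (nb u i))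
include hnb

theorem truncatedStars_le (c : V → Fin d) : truncatedStars A nb c ≤ J := by
  rintro u w ⟨-, ⟨hu, i, -, rfl⟩ | ⟨hw, i, -, rfl⟩⟩
  exacts [(hnb u hu).2 i, ((hnb w hw).2 i).symm]

variable [Fintype V] [DecidableEq V]

theorem degree_truncatedStars_of_mem (hindep : ∀ u ∈ A, ∀ v ∈ A, ¬ J.Adj u v) (c : V → Fin d)
    {u : V} (hu : u ∈ A) : (truncatedStars A nb c).degree u = c u + 1 := by
  have hnbr : (truncatedStars A nb c).neighborFinset u = (Iic (c u)).image (nb u) := by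
    ext w
    simp only [mem_neighborFinset, mem_image, mem_Iic]
    constructor
    · rintro ⟨-, ⟨-, i, hi, rfl⟩ | ⟨hw, i, -, rfl⟩⟩
      · exact ⟨i, hi, rfl⟩
      · exact absurd ((hnb w hw).2 i) (hindep w hw _ hu)
    · rintro ⟨i, hi, rfl⟩
      exact ⟨((hnb u hu).2 i).ne, Or.inl ⟨hu, i, hi, rfl⟩⟩
  rw [← card_neighborFinset_eq_degree, hnbr, card_image_of_injective _ (hnb u hu).1,
    Fin.card_Iic]

theorem degree_truncatedStars_le_one_of_notMem
    (hnocommon : ∀ u ∈ A, ∀ v ∈ A, u ≠ v → ∀ w : V, ¬ (J.Adj u w ∧ J.Adj v w)) (c : V → Fin d)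
    {w : V} (hw : w ∉ A) : (truncatedStars A nb c).degree w ≤ 1 := by
  have hcenter : ∀ x, (truncatedStars A nb c).Adj w x → x ∈ A ∧ J.Adj x w := by
    rintro x ⟨-, ⟨hw', -⟩ | ⟨hx, i, -, rfl⟩⟩
    exacts [absurd hw' hw, ⟨hx, (hnb x hx).2 i⟩]
  rw [← card_neighborFinset_eq_degree, card_le_one]
  intro x hx y hy
  obtain ⟨hxA, hxw⟩ := hcenter x ((mem_neighborFinset ..).mp hx)
  obtain ⟨hyA, hyw⟩ := hcenter y ((mem_neighborFinset ..).mp hy)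
  by_contra hxy
  exact hnocommon x hxA y hyA hxy w ⟨hxw, hyw⟩

variable (hindep : ∀ u ∈ A, ∀ v ∈ A, ¬ J.Adj u v)
  (hnocommon : ∀ u ∈ A, ∀ v ∈ A, u ≠ v → ∀ w : V, ¬ (J.Adj u w ∧ J.Adj v w))
include hindep hnocommon

theorem card_le_degree_truncatedStars (c : V → Fin d) (k : ℕ) :
    #{v | k + 2 ≤ (truncatedStars A nb c).degree v} =
      (A.val.map fun u => (c u : ℕ)).countP (k + 1 ≤ ·) := by
  rw [Multiset.countP_map, ← filter_val, card_val]
  congr 1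
  ext v
  by_cases hv : v ∈ A
  · simp [hv, degree_truncatedStars_of_mem hnb hindep c hv]
  · have := degree_truncatedStars_le_one_of_notMem hnb hnocommon c hv
    simp only [mem_filter, mem_univ, true_and, hv, false_and, iff_false]
    omega

theorem map_val_eq_of_iso_truncatedStars {c c' : V → Fin d}
    (f : truncatedStars A nb c ≃g truncatedStars A nb c') : A.val.map c = A.val.map c' := by
  refine Multiset.map_injective Fin.val_injective ?_
  simp only [Multiset.map_map]
  refine Multiset.eq_of_countP_le_eq ?_
  rintro (_ | k)
  · simp
  · exact (card_le_degree_truncatedStars hnb hindep hnocommon c k).symm.trans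
      ((f.card_le_degree_eq _).trans (card_le_degree_truncatedStars hnb hindep hnocommon c' k))

end SimpleGraph

theorem nonisomorphic_spanning_subgraphs_general {V : Type*} [Fintype V] [DecidableEq V]
    (J : SimpleGraph V) [DecidableRel J.Adj]
    (A B : Finset V) (hdisj : Disjoint A B)
    (hbip : ∀ u v : V, J.Adj u v → (u ∈ A ∧ v ∈ B) ∨ (u ∈ B ∧ v ∈ A))
    (a d : ℕ) (ha : A.card = a) (hd1 : 1 ≤ d)
    (hdeg : ∀ u ∈ A, d ≤ J.degree u)
    (hnocommon : ∀ u ∈ A, ∀ v ∈ A, u ≠ v → ∀ w : V, ¬ (J.Adj u w ∧ J.Adj v w)) :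
    ∃ f : Fin (Nat.choose (a + d - 1) (d - 1)) → SimpleGraph V,
      (∀ i, f i ≤ J) ∧ ∀ i j, i ≠ j → IsEmpty (f i ≃g f j) := by
  have hindep : ∀ u ∈ A, ∀ v ∈ A, ¬ J.Adj u v := fun u hu v hv huv => by
    rcases hbip u v huv with ⟨-, hvB⟩ | ⟨huB, -⟩
    exacts [disjoint_left.mp hdisj hv hvB, disjoint_left.mp hdisj hu huB]
  have hnb (u : V) : ∃ g : Fin d → V, u ∈ A → Injective g ∧ ∀ i, J.Adj u (g i) := by
    by_cases hu : u ∈ A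
    · obtain ⟨g, hg⟩ := exists_injective_adj (hdeg u hu)
      exact ⟨g, fun _ => hg⟩
    · exact ⟨fun _ => u, fun h => absurd h hu⟩
  choose nb hnb using hnb
  have : Nonempty (Fin d) := ⟨⟨0, hd1⟩⟩
  choose c hc using fun m : Sym (Fin d) a =>
    A.exists_map_val_eq (m : Multiset (Fin d)) (by simp [ha])
  let e := (Fintype.equivFinOfCardEq (Sym.card_fin_eq_choose hd1 a)).symm
  refine ⟨fun i => truncatedStars A nb (c (e i)), fun i => truncatedStars_le hnb _,
    fun i j hij => ⟨fun f => hij (e.injective (Sym.coe_injective ?_))⟩⟩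
  rw [← hc, ← hc]
  exact map_val_eq_of_iso_truncatedStars hnb hindep hnocommon f

/-- A finite bipartite graph with parts `A` and `B`, where `|A| = a`,
every vertex of `A` has degree at least `d` (`1 ≤ d ≤ a`), and no two distinct vertices
of `A` share a common neighbor, has at least `C(a + d - 1, d - 1)` pairwise non-isomorphic
spanning subgraphs. -/
theorem nonisomorphic_spanning_subgraphs {V : Type*} [Fintype V] [DecidableEq V]
    (J : SimpleGraph V) [DecidableRel J.Adj]
    (A B : Finset V) (hdisj : Disjoint A B) (hcover : A ∪ B = Finset.univ)
    (hbip : ∀ u v : V, J.Adj u v → (u ∈ A ∧ v ∈ B) ∨ (u ∈ B ∧ v ∈ A))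
    (a d : ℕ) (ha : A.card = a) (hd1 : 1 ≤ d) (hda : d ≤ a)
    (hdeg : ∀ u ∈ A, d ≤ J.degree u)
    (hnocommon : ∀ u ∈ A, ∀ v ∈ A, u ≠ v → ∀ w : V, ¬ (J.Adj u w ∧ J.Adj v w)) :
    ∃ f : Fin (Nat.choose (a + d - 1) (d - 1)) → SimpleGraph V,
      (∀ i, f i ≤ J) ∧ ∀ i j, i ≠ j → IsEmpty (f i ≃g f j) :=
  nonisomorphic_spanning_subgraphs_general J A B hdisj hbip a d ha hd1 hdeg hnocommon
end

section
/- Let G be a finite graph with minimum degree at least m, let u and v be vertices of G at distance L, and let P be a shortest path from u to v (so P has length L). Then the set of vertices of G that have at least one neighbor on P has size at least m · (⌊L/3⌋ + 1). -/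
/-!
Mark the vertices `x_k = P(3k)` of the geodesic, `0 ≤ k ≤ ⌊L/3⌋`. If `x_i` and `x_j` with `i < j`
had a common neighbour `w`, then going along `P` to `x_i`, through `w` to `x_j` and along `P` again
to `v` would be a walk of length `L - (j - i) + 2`, so `j - i ≤ 2`. Hence the neighbourhoods of the
marked vertices are pairwise disjoint; each has at least `m` elements and all of them consist of
vertices with a neighbour on `P`.
-/

open SimpleGraph

namespace Set

theorem card_mul_le_ncard_of_pairwiseDisjoint {ι α : Type*} {s : Finset ι} {f : ι → Set α}
    {t : Set α} {m : ℕ} (ht : t.Finite) (hdisj : (s : Set ι).PairwiseDisjoint f)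
    (hsub : ∀ i ∈ s, f i ⊆ t) (hm : ∀ i ∈ s, m ≤ (f i).ncard) : s.card * m ≤ t.ncard :=
  calc s.card * m = ∑ _i ∈ s, m := by rw [Finset.sum_const, smul_eq_mul]
    _ ≤ ∑ i ∈ s, (f i).ncard := Finset.sum_le_sum hm
    _ = (⋃ i ∈ (s : Set ι), f i).ncard := by
      rw [Finite.ncard_biUnion s.finite_toSet (fun i hi ↦ ht.subset (hsub i hi)) hdisj,
        finsum_mem_coe_finset]
    _ ≤ t.ncard := ncard_le_ncard (iUnion₂_subset hsub) ht

end Set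

namespace SimpleGraph.Walk

variable {V : Type*} {G : SimpleGraph V} {u v : V}

theorem le_add_two_of_adj_getVert_of_adj_getVert {p : G.Walk u v} (hp : p.length = G.dist u v)
    {i j : ℕ} {w : V} (hj : j ≤ p.length) (hiw : G.Adj (p.getVert i) w)
    (hjw : G.Adj (p.getVert j) w) : j ≤ i + 2 := by
  have := dist_le ((p.take i).append (cons hiw (cons hjw.symm (p.drop j))))
  simp only [length_append, length_cons, take_length, drop_length] at this
  omega

theorem pairwiseDisjoint_neighborSet_getVert_three_mul {p : G.Walk u v}
    (hp : p.length = G.dist u v) :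
    (Finset.range (p.length / 3 + 1) : Set ℕ).PairwiseDisjoint
      fun k ↦ G.neighborSet (p.getVert (3 * k)) := by
  intro a ha b hb hab
  simp only [Finset.coe_range, Set.mem_Iio] at ha hb
  refine Set.disjoint_left.mpr fun w hwa hwb ↦ hab ?_
  have hab := le_add_two_of_adj_getVert_of_adj_getVert hp (by omega) hwb hwa
  have hba := le_add_two_of_adj_getVert_of_adj_getVert hp (by omega) hwa hwb
  omega

end SimpleGraph.Walk

theorem neighbors_of_geodesic_lower_bound_general {V : Type*} [Fintype V]
    (G : SimpleGraph V) (m : ℕ) (hdeg : ∀ v : V, m ≤ (G.neighborSet v).ncard)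
    (u v : V) (L : ℕ) (hdist : G.dist u v = L)
    (P : G.Walk u v) (hlen : P.length = L) :
    m * (L / 3 + 1) ≤ {w : V | ∃ x ∈ P.support, G.Adj w x}.ncard := by
  subst hlen
  rw [mul_comm, ← Finset.card_range (P.length / 3 + 1)]
  refine Set.card_mul_le_ncard_of_pairwiseDisjoint (Set.toFinite _)
    (P.pairwiseDisjoint_neighborSet_getVert_three_mul hdist.symm) ?_ fun k _ ↦ hdeg _
  exact fun k _ w hw ↦ ⟨_, P.getVert_mem_support _, G.adj_symm hw⟩

/-- If `G` has minimum degree at least `m` and `P` is a shortest path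
between two vertices at distance `L`, then the set of vertices with a neighbor on `P`
has size at least `m * (⌊L/3⌋ + 1)`. -/
theorem neighbors_of_geodesic_lower_bound {V : Type*} [Fintype V]
    (G : SimpleGraph V) (m : ℕ) (hdeg : ∀ v : V, m ≤ (G.neighborSet v).ncard)
    (u v : V) (L : ℕ) (hdist : G.dist u v = L)
    (P : G.Walk u v) (hpath : P.IsPath) (hlen : P.length = L) :
    m * (L / 3 + 1) ≤ {w : V | ∃ x ∈ P.support, G.Adj w x}.ncard :=
  neighbors_of_geodesic_lower_bound_general G m hdeg u v L hdist P hlen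
end

section
/- Let G be a finite connected vertex-transitive graph of order n, degree m ≥ 1, and diameter D ≥ 1. Then there exists a set 𝒫 of geodesic paths in G, each of length D (each being a shortest path between two vertices at distance D), such that every vertex of G either lies on, or is adjacent to a vertex of, some path in 𝒫, and |𝒫| ≤ (3n/(mD)) · (1 + log₂((D + 1)(m + 1))). -/
/-!
Fix a geodesic `P` of length `D` from `x` and let `S = N[P]` be its closed neighbourhood. The
vertices of `P` have distinct distances from `x`, so every vertex is equal or adjacent to at most
three of them, and double counting gives `(D + 1)(m + 1) ≤ 3|S|` and `|S| ≤ (D + 1)(m + 1)`.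
Automorphisms map `P` to geodesics of length `D`, and since `Aut G` acts transitively, a random
translate `φ • S` meets any vertex set `U` in `|U||S|/n` vertices on average. Greedily choosing
`⌈(n/|S|) ln |S|⌉` translates thus leaves at most `n/|S|` vertices uncovered, and one more
translate for each of them gives a cover by `(n/|S|)(ln |S| + 1) + 1` geodesics, which is within
the bound.
-/

open Finset
open scoped Pointwise

namespace MulAction

variable {Γ α : Type*} [Group Γ] [MulAction Γ α] [DecidableEq α]

lemma card_inter_smul_eq_card_filter (g : Γ) (S U : Finset α) :
    #(U ∩ g • S) = #{w ∈ S | g • w ∈ U} := by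
  rw [← card_smul_finset g {w ∈ S | g • w ∈ U}]
  congr 1
  ext v
  simp only [mem_inter, mem_smul_finset, mem_filter]
  constructor
  · rintro ⟨hv, w, hw, rfl⟩
    exact ⟨w, ⟨hw, hv⟩, rfl⟩
  · rintro ⟨w, ⟨hw, hv⟩, rfl⟩
    exact ⟨hv, w, hw, rfl⟩

variable [Fintype Γ] [IsPretransitive Γ α] [Fintype α]

lemma card_mul_card_filter_smul_eq (a b : α) :
    Fintype.card α * #{g : Γ | g • a = b} = Fintype.card Γ := by
  have hfiber : ∀ c : α, #{g : Γ | g • a = c} = #{g : Γ | g • a = b} := by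
    intro c
    obtain ⟨h, rfl⟩ := exists_smul_eq Γ b c
    refine card_nbij' (h⁻¹ * ·) (h * ·) ?_ ?_ ?_ ?_ <;> intro g hg <;>
      simp_all [mul_smul]
  calc Fintype.card α * #{g : Γ | g • a = b}
      = ∑ c : α, #{g : Γ | g • a = c} := by simp [hfiber]
    _ = Fintype.card Γ := (card_eq_sum_card_fiberwise fun _ _ ↦ mem_univ _).symm

lemma card_mul_card_filter_smul_mem (a : α) (U : Finset α) :
    Fintype.card α * #{g : Γ | g • a ∈ U} = #U * Fintype.card Γ := by
  have hfiber : ∀ b ∈ U,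
      Fintype.card α * #{g ∈ {g : Γ | g • a ∈ U} | g • a = b} = Fintype.card Γ := by
    intro b hb
    rw [filter_filter, ← card_mul_card_filter_smul_eq (Γ := Γ) a b]
    congr 2
    ext g
    simp only [mem_filter, mem_univ, true_and, and_iff_right_iff_imp]
    rintro rfl
    exact hb
  rw [card_eq_sum_card_fiberwise (s := {g : Γ | g • a ∈ U}) (t := U) (f := (· • a))
      fun g hg ↦ (mem_filter.1 hg).2,
    mul_sum, sum_congr rfl hfiber, sum_const, smul_eq_mul]

theorem exists_card_mul_le_card_inter_smul (S U : Finset α) :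
    ∃ g : Γ, #U * #S ≤ Fintype.card α * #(U ∩ g • S) := by
  have hsum : ∑ g : Γ, Fintype.card α * #(U ∩ g • S) = ∑ _g : Γ, #U * #S := by
    simp_rw [card_inter_smul_eq_card_filter, card_filter]
    rw [← mul_sum, sum_comm, mul_sum]
    simp_rw [← card_filter, card_mul_card_filter_smul_mem, sum_const, card_univ, smul_eq_mul]
    ring
  obtain ⟨g, -, hg⟩ := exists_le_of_sum_le univ_nonempty hsum.ge
  exact ⟨g, hg⟩

end MulAction

section GreedyCover

variable {α ι : Type*} [Fintype α] [DecidableEq α] [Nonempty α]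

lemma exists_list_card_uncovered_le (t : ι → Finset α) {s : ℕ}
    (havg : ∀ U : Finset α, ∃ i, #U * s ≤ Fintype.card α * #(U ∩ t i)) (j : ℕ) :
    ∃ l : List ι, l.length = j ∧
      (#{a | ∀ i ∈ l, a ∉ t i} : ℝ) ≤
        Fintype.card α * Real.exp (-(s * j / Fintype.card α)) := by
  have hn : (0 : ℝ) < Fintype.card α := by exact_mod_cast Fintype.card_pos
  induction j with
  | zero => exact ⟨[], rfl, by simp⟩
  | succ j ih =>
    obtain ⟨l, rfl, hl⟩ := ih
    set U : Finset α := {a | ∀ i ∈ l, a ∉ t i}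
    obtain ⟨i, hi⟩ := havg U
    have hstep : ({a | ∀ i' ∈ i :: l, a ∉ t i'} : Finset α) = U \ t i := by
      ext a
      simp [U, and_comm]
    have hinter : (#U : ℝ) * s / Fintype.card α ≤ #(U ∩ t i) := by
      rw [div_le_iff₀ hn, mul_comm (#(U ∩ t i) : ℝ)]
      exact_mod_cast hi
    refine ⟨i :: l, rfl, ?_⟩
    rw [hstep]
    calc (#(U \ t i) : ℝ) = #U - #(U ∩ t i) := by
          rw [← card_sdiff_add_card_inter U (t i)]; push_cast; ring
      _ ≤ #U * (-(s / Fintype.card α) + 1) := by rw [mul_div_assoc] at hinter; linarith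
      _ ≤ #U * Real.exp (-(s / Fintype.card α)) := by gcongr; exact Real.add_one_le_exp _
      _ ≤ Fintype.card α * Real.exp (-(s * l.length / Fintype.card α)) *
            Real.exp (-(s / Fintype.card α)) := by gcongr
      _ = Fintype.card α * Real.exp (-(s * (i :: l).length / Fintype.card α)) := by
          rw [mul_assoc, ← Real.exp_add, List.length_cons]; push_cast; ring_nf

theorem exists_list_cover_length_le (t : ι → Finset α) {s : ℕ} (hs : 0 < s)
    (hcover : ∀ a, ∃ i, a ∈ t i)
    (havg : ∀ U : Finset α, ∃ i, #U * s ≤ Fintype.card α * #(U ∩ t i)) :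
    ∃ l : List ι, (∀ a, ∃ i ∈ l, a ∈ t i) ∧
      (l.length : ℝ) ≤ Fintype.card α / s * (Real.log s + 1) + 1 := by
  set n : ℝ := (Fintype.card α : ℝ)
  have hn : 0 < n := Nat.cast_pos.2 Fintype.card_pos
  have hs' : (0 : ℝ) < s := by exact_mod_cast hs
  have hlog : 0 ≤ n / s * Real.log s := by
    have : (1 : ℝ) ≤ s := by exact_mod_cast hs
    positivity [Real.log_nonneg this]
  obtain ⟨l, hlen, hU⟩ := exists_list_card_uncovered_le t havg ⌈n / s * Real.log s⌉₊
  set U : Finset α := {a | ∀ i ∈ l, a ∉ t i}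
  choose f hf using hcover
  refine ⟨l ++ U.toList.map f, fun a ↦ ?_, ?_⟩
  · by_cases ha : a ∈ U
    · exact ⟨f a, List.mem_append_right _ (List.mem_map.2 ⟨a, mem_toList.2 ha, rfl⟩), hf a⟩
    · obtain ⟨i, hil, hai⟩ : ∃ i ∈ l, a ∈ t i := by simpa [U] using ha
      exact ⟨i, by simp [hil], hai⟩
  have hUle : (#U : ℝ) ≤ n / s := by
    refine hU.trans ?_
    calc n * Real.exp (-(s * ⌈n / s * Real.log s⌉₊ / n))
        ≤ n * Real.exp (-Real.log s) := by
          gcongr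
          rw [le_div_iff₀ hn]
          calc Real.log s * n = s * (n / s * Real.log s) := by field_simp
            _ ≤ s * ⌈n / s * Real.log s⌉₊ := by gcongr; exact Nat.le_ceil _
      _ = n / s := by rw [Real.exp_neg, Real.exp_log hs', div_eq_mul_inv]
  have hj : (⌈n / s * Real.log s⌉₊ : ℝ) ≤ n / s * Real.log s + 1 :=
    (Nat.ceil_lt_add_one hlog).le
  simp only [List.length_append, List.length_map, length_toList, hlen]
  push_cast
  linarith

end GreedyCover

namespace SimpleGraph

variable {V W : Type*} {G : SimpleGraph V} {G' : SimpleGraph W}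

instance Iso.finite [Finite V] : Finite (G ≃g G) :=
  Finite.of_injective _ DFunLike.coe_injective

lemma Hom.edist_le (f : G →g G') (u v : V) : G'.edist (f u) (f v) ≤ G.edist u v := by
  by_cases h : G.Reachable u v
  · obtain ⟨p, hp⟩ := h.exists_walk_length_eq_edist
    rw [← hp, ← Walk.length_map f p]
    exact SimpleGraph.edist_le _
  · rw [edist_eq_top_of_not_reachable h]
    exact le_top

lemma Iso.edist_eq (φ : G ≃g G') (u v : V) : G'.edist (φ u) (φ v) = G.edist u v :=
  le_antisymm (φ.toHom.edist_le u v) <| by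
    simpa using φ.symm.toHom.edist_le (φ u) (φ v)

lemma Iso.dist_eq (φ : G ≃g G') (u v : V) : G'.dist (φ u) (φ v) = G.dist u v := by
  rw [dist, dist, φ.edist_eq]

lemma Walk.dist_getVert_of_length_eq_dist {u v : V} {p : G.Walk u v}
    (hp : p.length = G.dist u v) {i : ℕ} (hi : i ≤ p.length) : G.dist u (p.getVert i) = i := by
  have := length_eq_dist_of_subwalk hp (p.isSubwalk_take i)
  rw [take_length] at this
  omega

lemma Walk.injOn_dist_support_of_length_eq_dist {u v : V} {p : G.Walk u v}
    (hp : p.length = G.dist u v) : Set.InjOn (G.dist u) {w | w ∈ p.support} := by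
  intro a ha b hb hab
  obtain ⟨i, rfl, hi⟩ := p.mem_support_iff_exists_getVert.1 ha
  obtain ⟨j, rfl, hj⟩ := p.mem_support_iff_exists_getVert.1 hb
  rw [dist_getVert_of_length_eq_dist hp hi, dist_getVert_of_length_eq_dist hp hj] at hab
  rw [hab]

lemma Walk.card_support_toFinset [DecidableEq V] {u v : V} {p : G.Walk u v} (hp : p.IsPath) :
    #p.support.toFinset = p.length + 1 := by
  rw [List.toFinset_card_of_nodup hp.support_nodup, length_support]

variable [Fintype V] [DecidableEq V] [DecidableRel G.Adj]

variable (G) in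
def closedNbhd (T : Finset V) : Finset V := {v | ∃ u ∈ T, u = v ∨ G.Adj u v}

lemma mem_closedNbhd {T : Finset V} {v : V} :
    v ∈ G.closedNbhd T ↔ ∃ u ∈ T, u = v ∨ G.Adj u v := by
  simp [closedNbhd]

lemma card_closedNbhd_filter_eq_or_adj {T : Finset V} {m : ℕ} (hreg : G.IsRegularOfDegree m)
    {u : V} (hu : u ∈ T) : #{v ∈ G.closedNbhd T | u = v ∨ G.Adj u v} = m + 1 := by
  have : ({v ∈ G.closedNbhd T | u = v ∨ G.Adj u v} : Finset V) =
      insert u (G.neighborFinset u) := by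
    ext v
    simp only [mem_filter, mem_insert, mem_neighborFinset, mem_closedNbhd]
    exact ⟨fun h ↦ by rcases h.2 with rfl | h <;> simp_all,
      fun h ↦ ⟨⟨u, hu, by grind⟩, by grind⟩⟩
  rw [this, card_insert_of_notMem (notMem_neighborFinset_self G u),
    card_neighborFinset_eq_degree, hreg u]

lemma card_closedNbhd_le {m : ℕ} (hreg : G.IsRegularOfDegree m) (T : Finset V) :
    #(G.closedNbhd T) ≤ #T * (m + 1) := by
  simpa using card_mul_le_card_mul' (fun u v ↦ u = v ∨ G.Adj u v)
    (fun v hv ↦ card_pos.2 (by simpa [Finset.Nonempty, mem_closedNbhd] using hv))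
    (fun u hu ↦ (card_closedNbhd_filter_eq_or_adj hreg hu).le)

lemma card_mul_le_card_closedNbhd_mul_three {m : ℕ} (hreg : G.IsRegularOfDegree m)
    {T : Finset V} {x : V} (hT : Set.InjOn (G.dist x) T) :
    #T * (m + 1) ≤ #(G.closedNbhd T) * 3 := by
  refine card_mul_le_card_mul (fun u v ↦ u = v ∨ G.Adj u v)
    (fun u hu ↦ (card_closedNbhd_filter_eq_or_adj hreg hu).ge) fun v _ ↦ ?_
  -- `T`-vertices in or next to `v` have distinct distances from `x`, all within one of `v`'s.
  calc #{u ∈ T | u = v ∨ G.Adj u v}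
      ≤ #(Icc (G.dist x v - 1) (G.dist x v + 1)) := by
        refine card_le_card_of_injOn (G.dist x) (fun u hu ↦ ?_)
          (hT.mono fun u hu ↦ (mem_filter.1 hu).1)
        obtain ⟨-, rfl | hadj⟩ := mem_filter.1 hu
        · simp
        · have := hadj.diff_dist_adj (u := x)
          simp only [coe_Icc, Set.mem_Icc]
          omega
    _ ≤ 3 := by simp; omega

lemma Walk.card_closedNbhd_support_le {m : ℕ} (hreg : G.IsRegularOfDegree m) {u v : V}
    {p : G.Walk u v} (hp : p.IsPath) :
    #(G.closedNbhd p.support.toFinset) ≤ (p.length + 1) * (m + 1) :=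
  card_support_toFinset hp ▸ card_closedNbhd_le hreg _

lemma Walk.length_succ_mul_le_card_closedNbhd_support_mul_three {m : ℕ}
    (hreg : G.IsRegularOfDegree m) {u v : V} {p : G.Walk u v} (hp : p.length = G.dist u v) :
    (p.length + 1) * (m + 1) ≤ #(G.closedNbhd p.support.toFinset) * 3 :=
  card_support_toFinset (p.isPath_of_length_eq_dist hp) ▸
    card_mul_le_card_closedNbhd_mul_three hreg (x := u) (by
      simpa using p.injOn_dist_support_of_length_eq_dist hp)

lemma Walk.mem_support_map_or_adj_of_mem_smul_closedNbhd (φ : G ≃g G) {u v a : V}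
    (p : G.Walk u v) (ha : a ∈ φ • G.closedNbhd p.support.toFinset) :
    a ∈ (p.map φ.toHom).support ∨ ∃ b ∈ (p.map φ.toHom).support, G.Adj a b := by
  obtain ⟨w, hw, rfl⟩ := mem_smul_finset.1 ha
  obtain ⟨b, hb, rfl | hadj⟩ := mem_closedNbhd.1 hw
  · exact Or.inl (by simpa using hb)
  · exact Or.inr ⟨φ b, by simpa using hb, (φ.map_adj_iff.2 hadj).symm⟩

end SimpleGraph

lemma fifteen_mul_le_eight_mul_of_le_fifteen {m D : ℕ} (hm : 1 ≤ m) (hD : 1 ≤ D)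
    (h : (D + 1) * (m + 1) ≤ 15) : 15 * (m * D) ≤ 8 * ((D + 1) * (m + 1)) := by
  have hm6 : m ≤ 6 := by nlinarith
  have hD6 : D ≤ 6 := by nlinarith
  interval_cases m <;> interval_cases D <;> omega

lemma log_add_two_le_mul_one_add_logb {m D : ℕ} (hm : 1 ≤ m) (hD : 1 ≤ D) :
    Real.log ((D + 1) * (m + 1)) + 2 ≤
      (D + 1) * (m + 1) / (m * D) * (1 + Real.logb 2 ((D + 1) * (m + 1))) := by
  set q : ℝ := (D + 1) * (m + 1)
  have hm' : (1 : ℝ) ≤ m := by exact_mod_cast hm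
  have hD' : (1 : ℝ) ≤ D := by exact_mod_cast hD
  have hmD : (0 : ℝ) < m * D := by positivity
  have hq4 : 4 ≤ q := by nlinarith
  have hlog2 : 0 < Real.log 2 := Real.log_pos one_lt_two
  have hlog2' : Real.log 2 < 7 / 10 := by linarith [Real.log_two_lt_d9]
  have hlogq : Real.log q = Real.logb 2 q * Real.log 2 := by
    rw [Real.logb, div_mul_cancel₀ _ hlog2.ne']
  have hL2 : 2 ≤ Real.logb 2 q := by
    rw [Real.le_logb_iff_rpow_le one_lt_two (by positivity)]; norm_num; linarith
  -- `q/(mD) ≥ 1` suffices once `log₂ q ≥ 4`; below that, `q ≤ 15` forces `q/(mD) ≥ 15/8`.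
  rcases le_or_gt 16 ((D + 1) * (m + 1)) with hbig | hsmall
  · have hq16 : (16 : ℝ) ≤ q := by simp only [q]; exact_mod_cast hbig
    have hL4 : 4 ≤ Real.logb 2 q := by
      rw [Real.le_logb_iff_rpow_le one_lt_two (by positivity)]; norm_num; linarith
    have hc : 1 ≤ q / (m * D) := by rw [le_div_iff₀ hmD]; nlinarith
    nlinarith
  · have hc : 15 / 8 ≤ q / (m * D) := by
      have := fifteen_mul_le_eight_mul_of_le_fifteen hm hD (by omega)
      have : (15 : ℝ) * (m * D) ≤ 8 * q := by simp only [q]; exact_mod_cast this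
      rw [le_div_iff₀ hmD]
      linarith
    nlinarith

lemma div_mul_log_add_one_add_one_le {n s : ℝ} {m D : ℕ} (hm : 1 ≤ m) (hD : 1 ≤ D)
    (hs : 1 ≤ s) (hsn : s ≤ n) (hs_le : s ≤ (D + 1) * (m + 1))
    (hs_ge : (D + 1) * (m + 1) ≤ 3 * s) :
    n / s * (Real.log s + 1) + 1 ≤
      3 * n / (m * D) * (1 + Real.logb 2 ((D + 1) * (m + 1))) := by
  set q : ℝ := (D + 1) * (m + 1)
  have hs0 : 0 < s := by linarith
  have hq : 0 < q := by positivity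
  have hmD : (0 : ℝ) < m * D := by
    have : (1 : ℝ) ≤ m := by exact_mod_cast hm
    have : (1 : ℝ) ≤ D := by exact_mod_cast hD
    positivity
  have ha : 1 ≤ n / s := by rwa [one_le_div hs0]
  have hlog : Real.log s ≤ Real.log q := Real.log_le_log hs0 hs_le
  calc n / s * (Real.log s + 1) + 1 ≤ n / s * (Real.log q + 2) := by nlinarith
    _ ≤ 3 * n / q * (Real.log q + 2) := by
        refine mul_le_mul_of_nonneg_right ?_ (by linarith [Real.log_nonneg (by linarith : 1 ≤ q)])
        rw [div_le_div_iff₀ hs0 hq]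
        nlinarith
    _ ≤ 3 * n / q * (q / (m * D) * (1 + Real.logb 2 q)) := by
        gcongr
        · have : 0 ≤ n := by linarith
          positivity
        · exact log_add_two_le_mul_one_add_logb hm hD
    _ = 3 * n / (m * D) * (1 + Real.logb 2 q) := by field_simp

theorem vertex_transitive_geodesic_cover_general {V : Type*} [Fintype V]
    (G : SimpleGraph V) [DecidableRel G.Adj] (hconn : G.Connected)
    (hvt : ∀ x y : V, ∃ φ : G ≃g G, φ x = y)
    (m : ℕ) (hm : 1 ≤ m) (hreg : ∀ v : V, G.degree v = m)
    (D : ℕ) (hD : 1 ≤ D)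
    (hdiam_eq : ∃ x y : V, G.dist x y = D) :
    ∃ (k : ℕ) (ends : Fin k → V × V) (paths : ∀ i, G.Walk (ends i).1 (ends i).2),
      (∀ i, (paths i).IsPath ∧ (paths i).length = D ∧ G.dist (ends i).1 (ends i).2 = D) ∧
      (∀ v : V, ∃ i, v ∈ (paths i).support ∨ ∃ x ∈ (paths i).support, G.Adj v x) ∧
      (k : ℝ) ≤ (3 * Fintype.card V / (m * D)) * (1 + Real.logb 2 ((D + 1) * (m + 1))) := by
  classical
  obtain ⟨x, y, hxy⟩ := hdiam_eq
  obtain ⟨P, hP, hPdist⟩ := hconn.exists_path_of_dist x y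
  have hPlen : P.length = D := hPdist.trans hxy
  have : Nonempty V := hconn.nonempty
  have : Fintype (G ≃g G) := Fintype.ofFinite _
  have : MulAction.IsPretransitive (G ≃g G) V := ⟨hvt⟩
  set S := G.closedNbhd P.support.toFinset
  have hS_le : #S ≤ (D + 1) * (m + 1) := hPlen ▸ P.card_closedNbhd_support_le hreg hP
  have hS_ge : (D + 1) * (m + 1) ≤ #S * 3 :=
    hPlen ▸ P.length_succ_mul_le_card_closedNbhd_support_mul_three hreg hPdist
  have hxS : x ∈ S := SimpleGraph.mem_closedNbhd.2 ⟨x, by simp, Or.inl rfl⟩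
  obtain ⟨l, hcov, hlen⟩ := exists_list_cover_length_le (fun φ : G ≃g G ↦ φ • S)
    (card_pos.2 ⟨x, hxS⟩)
    (fun v ↦ (hvt x v).imp fun φ hφ ↦ mem_smul_finset.2 ⟨x, hxS, hφ⟩)
    (MulAction.exists_card_mul_le_card_inter_smul S)
  refine ⟨l.length, fun i ↦ (l.get i x, l.get i y), fun i ↦ P.map (l.get i).toHom,
    fun i ↦ ⟨hP.map (RelIso.injective _), by simp [hPlen], ((l.get i).dist_eq x y).trans hxy⟩,
    fun v ↦ ?_, ?_⟩
  · obtain ⟨φ, hφl, hvφ⟩ := hcov v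
    obtain ⟨i, rfl⟩ := List.mem_iff_get.1 hφl
    exact ⟨i, P.mem_support_map_or_adj_of_mem_smul_closedNbhd _ hvφ⟩
  · refine hlen.trans (div_mul_log_add_one_add_one_le hm hD ?_ ?_ ?_ ?_)
    · exact_mod_cast card_pos.2 ⟨x, hxS⟩
    · exact_mod_cast card_le_univ S
    · exact_mod_cast hS_le
    · exact_mod_cast (by omega : (D + 1) * (m + 1) ≤ 3 * #S)

/-- A finite connected vertex-transitive graph of order `n`, degree
`m ≥ 1`, and diameter `D ≥ 1` admits a set of at most `(3n/(mD)) * (1 + log₂((D+1)(m+1)))`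
geodesic paths of length `D` such that every vertex lies on, or is adjacent to a vertex
of, one of these paths. -/
theorem vertex_transitive_geodesic_cover {V : Type*} [Fintype V]
    (G : SimpleGraph V) [DecidableRel G.Adj] (hconn : G.Connected)
    (hvt : ∀ x y : V, ∃ φ : G ≃g G, φ x = y)
    (m : ℕ) (hm : 1 ≤ m) (hreg : ∀ v : V, G.degree v = m)
    (D : ℕ) (hD : 1 ≤ D)
    (hdiam_le : ∀ x y : V, G.dist x y ≤ D) (hdiam_eq : ∃ x y : V, G.dist x y = D) :
    ∃ (k : ℕ) (ends : Fin k → V × V) (paths : ∀ i, G.Walk (ends i).1 (ends i).2),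
      (∀ i, (paths i).IsPath ∧ (paths i).length = D ∧ G.dist (ends i).1 (ends i).2 = D) ∧
      (∀ v : V, ∃ i, v ∈ (paths i).support ∨ ∃ x ∈ (paths i).support, G.Adj v x) ∧
      (k : ℝ) ≤ (3 * Fintype.card V / (m * D)) * (1 + Real.logb 2 ((D + 1) * (m + 1))) :=
  vertex_transitive_geodesic_cover_general G hconn hvt m hm hreg D hD hdiam_eq
end

section
/- Let G be a finite graph containing no cycle of length 3 and no cycle of length 6. Then the bipartite double cover B(G) contains no cycle of length 6. -/
section
open SimpleGraph

lemma triangle_cycle {V : Type*} {G : SimpleGraph V} {a b c : V}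
    (hab : G.Adj a b) (hbc : G.Adj b c) (hca : G.Adj c a) :
    ∃ w : G.Walk a a, w.IsCycle ∧ w.length = 3 := by
  refine ⟨Walk.cons hab (Walk.cons hbc (Walk.cons hca Walk.nil)), ?_, rfl⟩
  have h1 := hab.ne; have h2 := hbc.ne; have h3 := hca.ne
  simp [Walk.isCycle_def, Walk.isTrail_def, Sym2.eq, Sym2.rel_iff', List.nodup_cons]
  tauto

lemma hexagon_cycle {V : Type*} {G : SimpleGraph V} {a b c d e f : V}
    (hab : G.Adj a b) (hbc : G.Adj b c) (hcd : G.Adj c d) (hde : G.Adj d e)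
    (hef : G.Adj e f) (hfa : G.Adj f a)
    (hac : a ≠ c) (had : a ≠ d) (hae : a ≠ e) (hbd : b ≠ d) (hbe : b ≠ e)
    (hbf : b ≠ f) (hce : c ≠ e) (hcf : c ≠ f) (hdf : d ≠ f) :
    ∃ w : G.Walk a a, w.IsCycle ∧ w.length = 6 := by
  refine ⟨Walk.cons hab (Walk.cons hbc (Walk.cons hcd (Walk.cons hde
    (Walk.cons hef (Walk.cons hfa Walk.nil))))), ?_, rfl⟩
  have h1 := hab.ne; have h2 := hbc.ne; have h3 := hcd.ne
  have h4 := hde.ne; have h5 := hef.ne; have h6 := hfa.ne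
  simp [Walk.isCycle_def, Walk.isTrail_def, Sym2.eq, Sym2.rel_iff', List.nodup_cons]
  tauto

end

/-- The bipartite double cover of a graph `G`: vertices `V × Bool`, with `(u, a)` adjacent
to `(v, b)` iff `u` and `v` are adjacent in `G` and `a ≠ b`. -/
def bipartiteDoubleCover {V : Type*} (G : SimpleGraph V) : SimpleGraph (V × Bool) where
  Adj x y := G.Adj x.1 y.1 ∧ x.2 ≠ y.2
  symm := ⟨fun _ _ h => ⟨h.1.symm, h.2.symm⟩⟩
  loopless := ⟨fun _ h => h.2 rfl⟩

/-- If `G` contains no cycle of length 3 and no cycle of length 6, then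
its bipartite double cover contains no cycle of length 6. -/
theorem bipartiteDoubleCover_C6_free {V : Type*} [Fintype V] (G : SimpleGraph V)
    (hC3 : ∀ (u : V) (c : G.Walk u u), c.IsCycle → c.length ≠ 3)
    (hC6 : ∀ (u : V) (c : G.Walk u u), c.IsCycle → c.length ≠ 6) :
    ∀ (x : V × Bool) (c : (bipartiteDoubleCover G).Walk x x), c.IsCycle →
      c.length ≠ 6 := by
  intro x c hc hl
  cases c with
  | nil => simp at hl
  | @cons _ x1 _ h0 p =>
  cases p with
  | nil => simp at hl
  | @cons _ x2 _ h1 p =>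
  cases p with
  | nil => simp at hl
  | @cons _ x3 _ h2 p =>
  cases p with
  | nil => simp at hl
  | @cons _ x4 _ h3 p =>
  cases p with
  | nil => simp at hl
  | @cons _ x5 _ h4 p =>
  cases p with
  | nil => simp at hl
  | @cons _ x6 _ h5 p =>
  cases p with
  | @cons _ x7 _ h6 p => simp [SimpleGraph.Walk.length_cons] at hl
  | nil =>
  -- vertices x, x1..x5
  obtain ⟨u0, b0⟩ := x
  obtain ⟨u1, b1⟩ := x1
  obtain ⟨u2, b2⟩ := x2
  obtain ⟨u3, b3⟩ := x3
  obtain ⟨u4, b4⟩ := x4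
  obtain ⟨u5, b5⟩ := x5
  obtain ⟨a0, e0⟩ := h0
  obtain ⟨a1, e1⟩ := h1
  obtain ⟨a2, e2⟩ := h2
  obtain ⟨a3, e3⟩ := h3
  obtain ⟨a4, e4⟩ := h4
  obtain ⟨a5, e5⟩ := h5
  simp only at a0 a1 a2 a3 a4 a5 e0 e1 e2 e3 e4 e5
  have hbool : ∀ p q r : Bool, p ≠ q → q ≠ r → p = r := by decide
  have hb02 : b0 = b2 := hbool _ _ _ e0 e1
  have hb24 : b2 = b4 := hbool _ _ _ e2 e3
  have hb13 : b1 = b3 := hbool _ _ _ e1 e2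
  have hb35 : b3 = b5 := hbool _ _ _ e3 e4
  -- distinctness from cycle
  have hnd := hc.2
  change [(u1, b1), (u2, b2), (u3, b3), (u4, b4), (u5, b5), (u0, b0)].Nodup at hnd
  simp [List.nodup_cons, Prod.ext_iff] at hnd
  have hu13 : u1 ≠ u3 := fun h => hnd.1.2.1 h hb13
  have hu15 : u1 ≠ u5 := fun h => hnd.1.2.2.2.1 h (hb13.trans hb35)
  have hu24 : u2 ≠ u4 := fun h => hnd.2.1.2.1 h hb24
  have hu20 : u2 ≠ u0 := fun h => hnd.2.1.2.2.2 h hb02.symm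
  have hu35 : u3 ≠ u5 := fun h => hnd.2.2.1.2.1 h hb35
  have hu40 : u4 ≠ u0 := fun h => hnd.2.2.2.1.2 h (hb02.trans hb24).symm
  by_cases h03 : u0 = u3
  · have hca : G.Adj u2 u0 := by rw [h03]; exact a2
    obtain ⟨w, hw, hwl⟩ := triangle_cycle a0 a1 hca
    exact hC3 _ w hw hwl
  by_cases h14 : u1 = u4
  · have hca : G.Adj u3 u1 := by rw [h14]; exact a3
    obtain ⟨w, hw, hwl⟩ := triangle_cycle a1 a2 hca
    exact hC3 _ w hw hwl
  by_cases h25 : u2 = u5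
  · have hca : G.Adj u4 u2 := by rw [h25]; exact a4
    obtain ⟨w, hw, hwl⟩ := triangle_cycle a2 a3 hca
    exact hC3 _ w hw hwl
  · obtain ⟨w, hw, hwl⟩ := hexagon_cycle a0 a1 a2 a3 a4 a5
      hu20.symm h03 hu40.symm hu13 h14 hu15 hu24 h25 hu35
    exact hC6 _ w hw hwl
end
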